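/- arXiv:math/0605227 — 9 statements merged into one kernel-verified Lean document; each statement's English description precedes it below -/
import Mathlib

section
/- Let p and q be odd primes, m ≥ 1, and let x, y be coprime positive integers with x² + q^(2m) = 2·y^p. Then there exist integers u, v such that y = u² + v², x = F_p(u,v), and q^m = G_p(u,v). -/
/-- `δ₄ = 1` if `p ≡ 1 (mod 4)` and `δ₄ = -1` if `p ≡ 3 (mod 4)`. -/
def d4 (p : ℕ) : ℤ := if p % 4 = 1 then 1 else -1

/-- `δ₈ = 1` if `p ≡ 1, 3 (mod 8)` and `δ₈ = -1` if `p ≡ 5, 7 (mod 8)`. -/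
def d8 (p : ℕ) : ℤ := if p % 8 = 1 ∨ p % 8 = 3 then 1 else -1

/-- `F_p(u,v) = Re((1+i)(u+iv)^p)`. -/
def Ffun (p : ℕ) (u v : ℤ) : ℤ :=
  ((⟨1, 1⟩ : GaussianInt) * (⟨u, v⟩ : GaussianInt) ^ p).re

/-- `G_p(u,v) = Im((1+i)(u+iv)^p)`. -/
def Gfun (p : ℕ) (u v : ℤ) : ℤ :=
  ((⟨1, 1⟩ : GaussianInt) * (⟨u, v⟩ : GaussianInt) ^ p).im

/-- `H_p(u,v) = G_p(u,v)/(u + δ₄ v)` (exact division whenever `u + δ₄ v ≠ 0`). -/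
def Hfun (p : ℕ) (u v : ℤ) : ℤ := Gfun p u v / (u + d4 p * v)

lemma unit_pow_four (ε : GaussianInt) (h : IsUnit ε) : ε ^ 4 = 1 := by
  have hn : ε.norm = 1 := (Zsqrtd.norm_eq_one_iff' (by norm_num) ε).mpr h
  rw [Zsqrtd.norm_def] at hn
  have hsq : ε.re * ε.re = 0 ∨ ε.im * ε.im = 0 := by
    rcases eq_or_ne ε.re 0 with h0 | h0
    · left; simp [h0]
    · right
      have h1 : 1 ≤ ε.re * ε.re := by
        rcases h0.lt_or_gt with h | h <;> nlinarith
      nlinarith [mul_self_nonneg ε.im]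
  have hri : ε.re * ε.im = 0 := by
    rcases hsq with h | h
    · rw [mul_self_eq_zero] at h; simp [h]
    · rw [mul_self_eq_zero] at h; simp [h]
  ext
  · show (ε^4).re = 1
    have : ε ^ 4 = (ε * ε) * (ε * ε) := by ring
    rw [this]
    simp only [Zsqrtd.re_mul, Zsqrtd.im_mul]
    nlinarith [hn, hri]
  · show (ε^4).im = 0
    have : ε ^ 4 = (ε * ε) * (ε * ε) := by ring
    rw [this]
    simp only [Zsqrtd.re_mul, Zsqrtd.im_mul]
    nlinarith [hn, hri]

theorem exists_uv_representation (p q m x y : ℕ)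
    (hp : Nat.Prime p) (hop : Odd p) (hq : Nat.Prime q) (hoq : Odd q)
    (hm : 1 ≤ m) (hx : 0 < x) (hy : 0 < y) (hcop : Nat.gcd x y = 1)
    (heq : x ^ 2 + q ^ (2 * m) = 2 * y ^ p) :
    ∃ u v : ℤ, (y : ℤ) = u ^ 2 + v ^ 2 ∧ (x : ℤ) = Ffun p u v ∧
      (q : ℤ) ^ m = Gfun p u v := by
  rw [mul_comm 2 m, pow_mul] at heq
  have heqZ : (x : ℤ) ^ 2 + ((q : ℤ) ^ m) ^ 2 = 2 * (y : ℤ) ^ p := by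
    exact_mod_cast congrArg (Nat.cast : ℕ → ℤ) heq
  -- parities
  have hoQ : Odd ((q : ℤ) ^ m) := (Int.odd_coe_nat q |>.mpr hoq).pow
  have hoX : Odd (x : ℤ) := by
    have h1 : Odd ((x : ℤ) ^ 2) := by
      have h2 : (x : ℤ) ^ 2 = 2 * (y : ℤ) ^ p - ((q:ℤ)^m) ^ 2 := by linarith
      rw [h2]
      exact (Even.sub_odd (even_two_mul _) (hoQ.pow))
    rcases Int.even_or_odd (x : ℤ) with h | h
    · obtain ⟨k, hk⟩ := Int.even_pow.mpr ⟨h, two_ne_zero⟩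
      obtain ⟨l, hl⟩ := h1
      omega
    · exact h
  obtain ⟨c, hc⟩ := hoX
  obtain ⟨d, hd⟩ := hoQ
  have hyodd : Odd (y : ℤ) := by
    have h2Y : 2 * (y : ℤ) ^ p = 2 * (2 * (c * c + c + d * d + d) + 1) := by
      rw [hc, hd] at heqZ; linarith [heqZ]
    have hY : (y : ℤ) ^ p = 2 * (c * c + c + d * d + d) + 1 :=
      mul_left_cancel₀ two_ne_zero h2Y
    exact (Int.odd_pow.mp ⟨_, hY⟩).resolve_right hp.pos.ne'
  -- w and the factorization
  set a : ℤ := c + d + 1 with ha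
  set b : ℤ := d - c with hb
  set w : GaussianInt := ⟨a, b⟩ with hw
  have hzw : (⟨1, 1⟩ : GaussianInt) * w = ⟨(x : ℤ), (q : ℤ) ^ m⟩ := by
    ext <;> simp [hw, Zsqrtd.re_mul, Zsqrtd.im_mul, ha, hb, hc, hd] <;> ring
  have hnormw : Zsqrtd.norm w = (y : ℤ) ^ p := by
    have h2 : 2 * Zsqrtd.norm w = 2 * (y : ℤ) ^ p := by
      rw [Zsqrtd.norm_def]
      rw [hc, hd] at heqZ
      simp only [hw, ha, hb]
      ring_nf
      ring_nf at heqZ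
      linarith [heqZ]
    exact mul_left_cancel₀ two_ne_zero h2
  have hmul : w * star w = ((y : ℤ) : GaussianInt) ^ p := by
    rw [← Zsqrtd.norm_eq_mul_conj, hnormw]
    push_cast
    ring
  -- coprimality over ℕ
  have hyoddN : Odd y := by rwa [Int.odd_coe_nat] at hyodd
  have hNcop : Nat.Coprime (x + q ^ m) y := by
    by_contra hco
    obtain ⟨r, hrp, hr1, hr2⟩ := Nat.Prime.not_coprime_iff_dvd.mp hco
    have hid : (x + q ^ m) ^ 2 = 2 * y ^ p + 2 * (x * q ^ m) := by
      have h3 : (x + q ^ m) ^ 2 = x ^ 2 + (q ^ m) ^ 2 + 2 * (x * q ^ m) := by ring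
      rw [h3, heq]
    have hr3 : r ∣ 2 * y ^ p + 2 * (x * q ^ m) := by
      rw [← hid]; exact Dvd.dvd.pow hr1 two_ne_zero
    have hr4 : r ∣ 2 * (x * q ^ m) :=
      (Nat.dvd_add_right (Dvd.dvd.mul_left (hr2.pow hp.pos.ne') 2)).mp hr3
    have hrne2 : r ≠ 2 := by
      rintro rfl
      have := Nat.odd_iff.mp hyoddN
      omega
    have hr5 : r ∣ x * q ^ m := by
      rcases (Nat.Prime.dvd_mul hrp).mp hr4 with h | h
      · exact absurd ((Nat.prime_dvd_prime_iff_eq hrp Nat.prime_two).mp h) hrne2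
      · exact h
    have hrx : ¬ r ∣ x := fun h =>
      hrp.one_lt.ne' (Nat.dvd_one.mp (hcop ▸ Nat.dvd_gcd h hr2))
    rcases (Nat.Prime.dvd_mul hrp).mp hr5 with h | h
    · exact hrx h
    · have hrq : r = q := (Nat.prime_dvd_prime_iff_eq hrp hq).mp (hrp.dvd_of_dvd_pow h)
      have hqm : r ∣ q ^ m := by rw [hrq]; exact dvd_pow_self q (Nat.one_le_iff_ne_zero.mp hm)
      have hrx' : r ∣ x := by
        have h6 := Nat.dvd_sub hr1 hqm
        rwa [Nat.add_sub_cancel] at h6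
      exact hrx hrx'
  -- coprimality over ℤ
  have h2a : 2 * a = (x : ℤ) + (q : ℤ) ^ m := by rw [hc, hd, ha]; ring
  have hIcop : IsCoprime ((y : ℤ) ^ p) (2 * a * (2 * a)) := by
    have h1 : IsCoprime ((y : ℤ)) (2 * a) := by
      rw [Int.isCoprime_iff_gcd_eq_one, h2a]
      have h2 : ((x : ℤ) + (q : ℤ) ^ m) = ((x + q ^ m : ℕ) : ℤ) := by push_cast; ring
      rw [h2, Int.gcd_natCast_natCast]
      exact Nat.coprime_comm.mp hNcop
    have := h1.pow (m := p) (n := 2)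
    rwa [pow_two] at this
  have hwcop : IsCoprime w (star w) := by
    apply EuclideanDomain.isCoprime_of_dvd
    · rintro ⟨h0, -⟩
      rw [h0, Zsqrtd.norm_zero] at hnormw
      have := pow_pos (show (0:ℤ) < y by exact_mod_cast hy) p
      omega
    · rintro z hznu hz0 hzw' hzsw
      apply hznu
      have hd1 : Zsqrtd.norm z ∣ (y : ℤ) ^ p := by
        obtain ⟨k, hk⟩ := hzw'
        rw [← hnormw, hk, Zsqrtd.norm_mul]
        exact dvd_mul_right _ _
      have hsum : w + star w = ((2 * a : ℤ) : GaussianInt) := by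
        ext <;> simp [hw] <;> ring
      have hd2 : Zsqrtd.norm z ∣ 2 * a * (2 * a) := by
        have h3 : z ∣ ((2 * a : ℤ) : GaussianInt) := hsum ▸ dvd_add hzw' hzsw
        obtain ⟨k, hk⟩ := h3
        have h4 := congrArg Zsqrtd.norm hk
        rw [Zsqrtd.norm_mul, Zsqrtd.norm_intCast] at h4
        exact ⟨_, h4⟩
      have hu : IsUnit (Zsqrtd.norm z) := hIcop.isUnit_of_dvd' hd1 hd2
      have hn1 : Zsqrtd.norm z = 1 := by
        rcases Int.isUnit_iff.mp hu with h | h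
        · exact h
        · exfalso
          have := Zsqrtd.norm_nonneg (by norm_num : (-1:ℤ) ≤ 0) z
          omega
      exact (Zsqrtd.norm_eq_one_iff' (by norm_num) z).mp hn1
  -- p-th power
  obtain ⟨t, ht⟩ := exists_associated_pow_of_mul_eq_pow' hwcop hmul
  obtain ⟨uu, huu⟩ := ht
  have hε4 : (uu : GaussianInt) ^ 4 = 1 := unit_pow_four _ uu.isUnit
  obtain ⟨j, hj⟩ := hop
  set s : GaussianInt := t * (uu : GaussianInt) ^ p with hs
  have hsp : s ^ p = w := by
    rw [hs, mul_pow, ← pow_mul, ← huu]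
    congr 1
    have hpp : p * p = 4 * (j * j + j) + 1 := by rw [hj]; ring
    rw [hpp, pow_succ, pow_mul, hε4, one_pow, one_mul]
  have hnormpow : ∀ (g : GaussianInt) (n : ℕ), Zsqrtd.norm (g ^ n) = (Zsqrtd.norm g) ^ n := by
    intro g n
    induction n with
    | zero => simp
    | succ k ih => rw [pow_succ, pow_succ, Zsqrtd.norm_mul, ih]
  have hse : (⟨s.re, s.im⟩ : GaussianInt) = s := rfl
  refine ⟨s.re, s.im, ?_, ?_, ?_⟩
  · have hns : Zsqrtd.norm s = (y : ℤ) := by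
      have h1 : (Zsqrtd.norm s) ^ p = ((y : ℤ)) ^ p := by
        rw [← hnormw, ← hsp, hnormpow]
      exact (Odd.strictMono_pow (R := ℤ) ⟨j, hj⟩).injective h1
    rw [← hns, Zsqrtd.norm_def]; ring
  · show (x : ℤ) = Ffun p s.re s.im
    rw [Ffun, hse, hsp, hzw]
  · show (q : ℤ) ^ m = Gfun p s.re s.im
    rw [Gfun, hse, hsp, hzw]
end

section
/- Let p be an odd prime. For all integers u and v, the integer u − δ4·v divides F_p(u,v), and the integer u + δ4·v divides G_p(u,v). -/
lemma sq_imag (a : ℤ) : (⟨0,a⟩ : GaussianInt)^2 = ((-(a^2) : ℤ) : GaussianInt) := by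
  ext <;> simp [sq, Zsqrtd.re_mul, Zsqrtd.im_mul]

lemma imag_pow_even (a : ℤ) (k : ℕ) :
    (⟨0,a⟩ : GaussianInt)^(2*k) = ((((-(a^2))^k : ℤ)) : GaussianInt) := by
  rw [pow_mul, sq_imag, ← Int.cast_pow]

lemma imag_pow_even_im (a : ℤ) (k : ℕ) : ((⟨0,a⟩ : GaussianInt)^(2*k)).im = 0 := by
  rw [imag_pow_even]; exact Zsqrtd.im_intCast _

lemma imag_pow_odd_re (a : ℤ) (k : ℕ) : ((⟨0,a⟩ : GaussianInt)^(2*k+1)).re = 0 := by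
  rw [pow_succ, imag_pow_even]
  simp only [Zsqrtd.re_mul, Zsqrtd.re_intCast, Zsqrtd.im_intCast]
  ring

/-- (1+i)·(1+i)^p = (2i)^m when p+1 = 2m. -/
lemma val1 (p m : ℕ) (h : p + 1 = 2*m) :
    (⟨1,1⟩ : GaussianInt) * (⟨1,1⟩ : GaussianInt)^p = (⟨0,2⟩ : GaussianInt)^m := by
  have h2 : ((⟨1,1⟩ : GaussianInt))^2 = ⟨0,2⟩ := by
    ext <;> simp [sq, Zsqrtd.re_mul, Zsqrtd.im_mul]
  calc (⟨1,1⟩ : GaussianInt) * (⟨1,1⟩ : GaussianInt)^p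
      = (⟨1,1⟩ : GaussianInt)^(p+1) := by rw [pow_succ]; ring
    _ = ((⟨1,1⟩ : GaussianInt)^2)^m := by rw [← pow_mul, ← h]
    _ = _ := by rw [h2]

/-- (1+i)·(-1+i)^p = (-2)·(-2i)^m when p = 2m+1. -/
lemma val2 (p m : ℕ) (h : p = 2*m + 1) :
    (⟨1,1⟩ : GaussianInt) * (⟨-1,1⟩ : GaussianInt)^p
      = ((-2 : ℤ) : GaussianInt) * (⟨0,-2⟩ : GaussianInt)^m := by
  have h2 : ((⟨-1,1⟩ : GaussianInt))^2 = (⟨0,-2⟩ : GaussianInt) := by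
    ext <;> simp [sq, Zsqrtd.re_mul, Zsqrtd.im_mul]
  have h3 : (⟨1,1⟩ : GaussianInt) * (⟨-1,1⟩ : GaussianInt) = ((-2 : ℤ) : GaussianInt) := by
    ext <;> simp [Zsqrtd.re_mul, Zsqrtd.im_mul]
  calc (⟨1,1⟩ : GaussianInt) * (⟨-1,1⟩ : GaussianInt)^p
      = ((⟨1,1⟩ : GaussianInt) * (⟨-1,1⟩ : GaussianInt)) * ((⟨-1,1⟩ : GaussianInt)^2)^m := by
        rw [h, pow_succ, ← pow_mul]; ring
    _ = _ := by rw [h2, h3]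

lemma dvd_parts (d : ℤ) (z w : GaussianInt) (h : z - w = (d : GaussianInt)) (p : ℕ) :
    d ∣ ((⟨1,1⟩ : GaussianInt) * z^p).re - ((⟨1,1⟩ : GaussianInt) * w^p).re ∧
    d ∣ ((⟨1,1⟩ : GaussianInt) * z^p).im - ((⟨1,1⟩ : GaussianInt) * w^p).im := by
  have hd : (d : GaussianInt) ∣ (⟨1,1⟩ : GaussianInt) * z^p - (⟨1,1⟩ : GaussianInt) * w^p := by
    rw [← mul_sub, ← h]
    exact Dvd.dvd.mul_left (sub_dvd_pow_sub_pow z w p) _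
  obtain ⟨y, hy⟩ := hd
  constructor
  · refine ⟨y.re, ?_⟩
    have := congrArg Zsqrtd.re hy
    simpa [Zsqrtd.re_mul] using this
  · refine ⟨y.im, ?_⟩
    have := congrArg Zsqrtd.im hy
    simpa [Zsqrtd.im_mul] using this

lemma scale_fact (v c : ℤ) (p : ℕ) :
    (⟨1,1⟩ : GaussianInt) * (⟨c*v, v⟩ : GaussianInt)^p
      = ((v^p : ℤ) : GaussianInt) * ((⟨1,1⟩ : GaussianInt) * (⟨c,1⟩ : GaussianInt)^p) := by
  have h : (⟨c*v, v⟩ : GaussianInt) = ((v : ℤ) : GaussianInt) * ⟨c,1⟩ := by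
    ext <;> simp [Zsqrtd.re_mul, Zsqrtd.im_mul, mul_comm]
  rw [h, mul_pow, ← Int.cast_pow]
  ring

lemma final_re (d c u v : ℤ) (p : ℕ)
    (hz : (⟨u,v⟩ : GaussianInt) - (⟨c*v, v⟩ : GaussianInt) = (d : GaussianInt))
    (h0 : ((⟨1,1⟩ : GaussianInt) * (⟨c,1⟩ : GaussianInt)^p).re = 0) :
    d ∣ Ffun p u v := by
  have h := (dvd_parts d _ _ hz p).1
  rw [scale_fact] at h
  simp only [Zsqrtd.re_mul, Zsqrtd.re_intCast, Zsqrtd.im_intCast, h0] at h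
  simpa [Ffun] using h

lemma final_im (d c u v : ℤ) (p : ℕ)
    (hz : (⟨u,v⟩ : GaussianInt) - (⟨c*v, v⟩ : GaussianInt) = (d : GaussianInt))
    (h0 : ((⟨1,1⟩ : GaussianInt) * (⟨c,1⟩ : GaussianInt)^p).im = 0) :
    d ∣ Gfun p u v := by
  have h := (dvd_parts d _ _ hz p).2
  rw [scale_fact] at h
  simp only [Zsqrtd.im_mul, Zsqrtd.re_intCast, Zsqrtd.im_intCast, h0] at h
  simpa [Gfun] using h

theorem divides_F_and_G (p : ℕ) (hp : Nat.Prime p) (hop : Odd p) (u v : ℤ) :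
    (u - d4 p * v) ∣ Ffun p u v ∧ (u + d4 p * v) ∣ Gfun p u v := by
  have hp2 : p % 2 = 1 := Nat.odd_iff.mp hop
  have h4 : p % 4 = 1 ∨ p % 4 = 3 := by omega
  rcases h4 with hr | hr
  · have hδ : d4 p = 1 := by simp [d4, hr]
    constructor
    · refine final_re _ 1 u v p ?_ ?_
      · ext <;> simp [hδ]
      · rw [val1 p (2*(p/4)+1) (by omega)]
        exact imag_pow_odd_re 2 (p/4)
    · refine final_im _ (-1) u v p ?_ ?_
      · ext <;> simp [hδ] <;> ring
      · rw [val2 p (2*(p/4)) (by omega)]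
        simp [Zsqrtd.im_mul, imag_pow_even_im]
  · have hδ : d4 p = -1 := by simp [d4, hr]
    constructor
    · refine final_re _ (-1) u v p ?_ ?_
      · ext <;> simp [hδ] <;> ring
      · rw [val2 p (2*(p/4)+1) (by omega)]
        simp [Zsqrtd.re_mul, imag_pow_odd_re]
    · refine final_im _ 1 u v p ?_ ?_
      · ext <;> simp [hδ] <;> ring
      · rw [val1 p (2*(p/4+1)) (by omega)]
        exact imag_pow_even_im 2 (p/4+1)
end

section
/- Let p be an odd prime. The polynomial H_p(X, 1), which has integer coefficients and degree p − 1, is irreducible over the rational numbers. -/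
open Polynomial

namespace HpAux

/-- The imaginary part of a Gaussian-integer polynomial, coefficientwise. -/
noncomputable def imPoly (P : Polynomial GaussianInt) : Polynomial ℤ :=
  ⟨AddMonoidAlgebra.ofCoeff (P.toFinsupp.coeff.mapRange Zsqrtd.im rfl)⟩

@[simp] lemma imPoly_coeff (P : Polynomial GaussianInt) (n : ℕ) :
    (imPoly P).coeff n = (P.coeff n).im := rfl

lemma imPoly_add (P Q : Polynomial GaussianInt) :
    imPoly (P + Q) = imPoly P + imPoly Q := by
  ext n; simp [Zsqrtd.im_add]

lemma imPoly_sub (P Q : Polynomial GaussianInt) :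
    imPoly (P - Q) = imPoly P - imPoly Q := by
  ext n; simp [Zsqrtd.im_sub]

lemma imPoly_monomial (n : ℕ) (c : GaussianInt) :
    imPoly (monomial n c) = monomial n c.im := by
  ext k; simp [coeff_monomial, apply_ite Zsqrtd.im]

lemma imPoly_C (c : GaussianInt) : imPoly (C c) = C c.im := by
  rw [← monomial_zero_left, imPoly_monomial, monomial_zero_left]

lemma int_mul_im (r : ℤ) (w : GaussianInt) :
    ((r : GaussianInt) * w).im = r * w.im := by
  simp [Zsqrtd.im_mul]

lemma imPoly_eval (P : Polynomial GaussianInt) (a : ℤ) :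
    (imPoly P).eval a = (P.eval (a : GaussianInt)).im := by
  induction P using Polynomial.induction_on' with
  | add p q hp hq => simp [imPoly_add, hp, hq, Zsqrtd.im_add]
  | monomial n c =>
      have h : ((a : GaussianInt)) ^ n = ((a ^ n : ℤ) : GaussianInt) := by push_cast; ring
      have hre : (((a : GaussianInt)) ^ n).re = a ^ n := by
        rw [h, Zsqrtd.re_intCast]
      have him : (((a : GaussianInt)) ^ n).im = 0 := by
        rw [h, Zsqrtd.im_intCast]
      rw [imPoly_monomial, eval_monomial, eval_monomial, Zsqrtd.im_mul, hre, him]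
      ring

lemma imPoly_derivative (P : Polynomial GaussianInt) :
    imPoly (derivative P) = derivative (imPoly P) := by
  ext n
  simp [coeff_derivative, Zsqrtd.im_mul, Zsqrtd.re_add, Zsqrtd.im_add,
    Zsqrtd.re_natCast, Zsqrtd.im_natCast]

end HpAux

namespace HpAux

/-- The Gaussian integer `i`. -/
def gi : GaussianInt := ⟨0, 1⟩

/-- The Gaussian integer `1 + i`. -/
def gu : GaussianInt := ⟨1, 1⟩

lemma gi_pow_four : gi ^ 4 = 1 := by decide

lemma gi_pow_mod (n : ℕ) : gi ^ n = gi ^ (n % 4) := by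
  conv_lhs => rw [← Nat.div_add_mod n 4]
  rw [pow_add, pow_mul, gi_pow_four, one_pow, one_mul]

end HpAux

open HpAux in
/-- `H_p(X,1)` (the integer polynomial `Hx` with `G_p(a,1) = (a + δ₄)·Hx(a)` for all
integers `a`) has degree `p - 1` and is irreducible over `ℚ`. -/
theorem HpX_irreducible (p : ℕ) (hp : Nat.Prime p) (hop : Odd p)
    (Hx : Polynomial ℤ)
    (hHx : ∀ a : ℤ, Gfun p a 1 = (a + d4 p) * Hx.eval a) :
    Hx.natDegree = p - 1 ∧ Irreducible (Hx.map (Int.castRingHom ℚ)) := by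
  haveI := Fact.mk hp
  have hp2 : p ≠ 2 := by rintro rfl; exact (by decide : ¬ Odd 2) hop
  have hp3 : 3 ≤ p := by have := hp.two_le; omega
  obtain ⟨k, hk⟩ := hop
  set δ : ℤ := d4 p with hδdef
  have hδ2 : δ = 1 ∨ δ = -1 := by
    rw [hδdef]; unfold d4; split <;> simp
  have hδsq : δ * δ = 1 := by rcases hδ2 with h | h <;> simp [h]
  -- `i^p = δ • i`
  have hp4 : p % 4 = 1 ∨ p % 4 = 3 := by omega
  have hip : gi ^ p = (δ : GaussianInt) * gi := by
    rw [gi_pow_mod]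
    rcases hp4 with h | h <;> rw [h] <;> rw [hδdef] <;> unfold d4 <;>
      simp [h] <;> decide
  -- the polynomial `G_p(X, 1)` over the Gaussian integers and over `ℤ`
  set P : Polynomial GaussianInt := C gu * (X + C gi) ^ p with hPdef
  set B : Polynomial ℤ := imPoly P with hBdef
  have hPeval : ∀ a : ℤ, P.eval (a : GaussianInt) = gu * (⟨a, 1⟩ : GaussianInt) ^ p := by
    intro a
    have : ((a : GaussianInt) + gi) = (⟨a, 1⟩ : GaussianInt) := by
      ext <;> simp [gi, Zsqrtd.re_intCast, Zsqrtd.im_intCast]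
    simp [hPdef, this]
  have hBeval : ∀ a : ℤ, B.eval a = Gfun p a 1 := by
    intro a
    rw [hBdef, imPoly_eval, hPeval]
    rfl
  have hBH : B = (X + C δ) * Hx := by
    apply Polynomial.funext
    intro a
    rw [hBeval, hHx]
    simp [mul_comm]
  -- degree facts
  have hXCi : ((X + C gi) ^ p).Monic := (monic_X_add_C gi).pow p
  have hXCideg : ((X + C gi) ^ p).natDegree = p := by
    rw [natDegree_pow, natDegree_X_add_C, mul_one]
  have hPcoeffp : P.coeff p = gu := by
    have h1 := hXCi.coeff_natDegree
    rw [hXCideg] at h1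
    rw [hPdef, coeff_C_mul, h1, mul_one]
  have hPcoeff_gt : ∀ n, p < n → P.coeff n = 0 := by
    intro n hn
    rw [hPdef, coeff_C_mul, coeff_eq_zero_of_natDegree_lt (by rw [hXCideg]; exact hn), mul_zero]
  have hBp : B.coeff p = 1 := by rw [hBdef, imPoly_coeff, hPcoeffp]; rfl
  have hBgt : ∀ n, p < n → B.coeff n = 0 := by
    intro n hn; rw [hBdef, imPoly_coeff, hPcoeff_gt n hn]; rfl
  have hBdeg : B.natDegree = p := by
    apply le_antisymm
    · exact natDegree_le_iff_coeff_eq_zero.2 fun n hn => hBgt n hn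
    · exact le_natDegree_of_ne_zero (by rw [hBp]; exact one_ne_zero)
  have hBmonic : B.Monic := by
    have : B.leadingCoeff = 1 := by rw [leadingCoeff, hBdeg] at *; exact hBp
    exact this
  have hHxne : Hx ≠ 0 := by
    rintro rfl
    exact hBmonic.ne_zero (by rw [hBH, mul_zero])
  have hdeg : Hx.natDegree = p - 1 := by
    have h := natDegree_mul (monic_X_add_C δ).ne_zero hHxne
    rw [← hBH, hBdeg, natDegree_X_add_C] at h
    omega
  have hHmonic : Hx.Monic := (monic_X_add_C δ).of_mul_monic_left (hBH ▸ hBmonic)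
  -- reduction mod `p`
  have hpnonunit : (p : GaussianInt) ∈ nonunits GaussianInt := by
    rw [mem_nonunits_iff]
    intro hun
    have hn := (Zsqrtd.norm_eq_one_iff' (by norm_num) _).2 hun
    have : ((p : GaussianInt)).norm = (p : ℤ) * p := by
      simp [Zsqrtd.norm, Zsqrtd.re_natCast, Zsqrtd.im_natCast]
    rw [this] at hn
    have : (3 : ℤ) ≤ p := by exact_mod_cast hp3
    nlinarith
  haveI : CharP (GaussianInt ⧸ (Ideal.span {(p : GaussianInt)} : Ideal GaussianInt)) p :=
    CharP.quotient _ p hpnonunit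
  set φ := Ideal.Quotient.mk (Ideal.span {(p : GaussianInt)} : Ideal GaussianInt) with hφdef
  set Q : Polynomial GaussianInt := C gu * (X ^ p + C (gi ^ p)) with hQdef
  have hmap : P.map φ = Q.map φ := by
    rw [hPdef, hQdef]
    simp only [Polynomial.map_mul, Polynomial.map_pow, Polynomial.map_add, map_C, map_X]
    congr 1
    rw [add_pow_char, ← C_pow, ← map_pow]
  have hdvdG : ∀ n, (p : GaussianInt) ∣ (P - Q).coeff n := by
    intro n
    have h0 : φ ((P - Q).coeff n) = 0 := by
      rw [← coeff_map, Polynomial.map_sub, hmap, sub_self, coeff_zero]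
    rwa [hφdef, Ideal.Quotient.eq_zero_iff_mem, Ideal.mem_span_singleton] at h0
  have himQ : imPoly Q = X ^ p + C δ := by
    have h1 : Q = monomial p gu + C (gu * gi ^ p) := by
      rw [hQdef, mul_add, ← C_mul, C_mul_X_pow_eq_monomial]
    have h2 : (gu * gi ^ p).im = δ := by
      rw [hip]
      rcases hδ2 with h | h <;> rw [h] <;> decide
    rw [h1, imPoly_add, imPoly_monomial, imPoly_C, h2]
    congr 1
    rw [X_pow_eq_monomial]
    rfl
  have hdvdZ : ∀ n, (p : ℤ) ∣ (B - (X ^ p + C δ)).coeff n := by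
    intro n
    obtain ⟨w, hw⟩ := hdvdG n
    refine ⟨w.im, ?_⟩
    have : (B - (X ^ p + C δ)).coeff n = ((P - Q).coeff n).im := by
      rw [hBdef, ← himQ, ← imPoly_sub, imPoly_coeff]
    rw [this, hw]
    have : ((p : GaussianInt)) = ((p : ℤ) : GaussianInt) := by push_cast; ring
    rw [this, int_mul_im]
  -- the image of `Hx` mod `p`
  set ψ : ℤ →+* ZMod p := Int.castRingHom (ZMod p) with hψdef
  have hψ : ∀ x : ℤ, ψ x = (x : ZMod p) := fun x => rfl
  have hBmap : B.map ψ = X ^ p + C (ψ δ) := by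
    have h0 : B.map ψ - (X ^ p + C δ).map ψ = 0 := by
      rw [← Polynomial.map_sub]
      ext n
      rw [coeff_map, coeff_zero, hψ]
      exact (ZMod.intCast_zmod_eq_zero_iff_dvd _ p).2 (hdvdZ n)
    have h1 : B.map ψ = (X ^ p + C δ).map ψ := by
      have := sub_eq_zero.1 h0; exact this
    rw [h1]
    simp
  have hfrob : (X + C (ψ δ)) ^ p = X ^ p + C (ψ δ) := by
    rw [add_pow_char, ← C_pow, ZMod.pow_card]
  have hHxmap : Hx.map ψ = (X + C (ψ δ)) ^ (p - 1) := by
    apply mul_left_cancel₀ (monic_X_add_C (ψ δ)).ne_zero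
    have h1 : (X + C (ψ δ)) * Hx.map ψ = B.map ψ := by
      rw [hBH, Polynomial.map_mul, Polynomial.map_add, map_X, map_C]
    rw [h1, hBmap, ← hfrob, ← pow_succ']
    congr 1
    omega
  -- the shifted polynomial `q(X) = Hx(X - δ)` is Eisenstein at `p`
  set q : Polynomial ℤ := Hx.comp (X - C δ) with hqdef
  have hqmonic : q.Monic := hHmonic.comp_X_sub_C δ
  have hqdeg : q.natDegree = p - 1 := by
    rw [hqdef, natDegree_comp, natDegree_X_sub_C, hdeg, mul_one]
  have hqmap : q.map ψ = X ^ (p - 1) := by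
    rw [hqdef, Polynomial.map_comp, hHxmap, Polynomial.map_sub, map_X, map_C, pow_comp,
      add_comp, X_comp, C_comp]
    congr 1
    ring
  have hqcoeff : ∀ n, n < p - 1 → (p : ℤ) ∣ q.coeff n := by
    intro n hn
    have h0 : ψ (q.coeff n) = 0 := by
      rw [← coeff_map, hqmap, coeff_X_pow, if_neg (by omega)]
    rw [hψ] at h0
    exact (ZMod.intCast_zmod_eq_zero_iff_dvd _ p).1 h0
  have hq0 : q.coeff 0 = Hx.eval (-δ) := by
    rw [coeff_zero_eq_eval_zero, hqdef, eval_comp]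
    simp
  -- the constant coefficient of `q`
  have hppi : Prime (p : ℤ) := Nat.prime_iff_prime_int.mp hp
  have hderB : derivative B = Hx + (X + C δ) * derivative Hx := by
    rw [hBH, derivative_mul, derivative_X_add_C, one_mul]
  have hHeval : Hx.eval (-δ) = (derivative B).eval (-δ) := by
    rw [hderB]; simp
  set z : GaussianInt := ((-δ : ℤ) : GaussianInt) with hzdef
  have hzi : z + gi = (⟨-δ, 1⟩ : GaussianInt) := by
    ext <;> simp [hzdef, gi, Zsqrtd.re_intCast, Zsqrtd.im_intCast]
  have hsq : (z + gi) ^ 2 = ((-2 * δ : ℤ) : GaussianInt) * gi := by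
    rw [hzi, pow_two]
    ext
    · simp [Zsqrtd.re_mul, Zsqrtd.im_mul, gi, Zsqrtd.re_intCast, Zsqrtd.im_intCast]
      nlinarith [hδsq]
    · simp [Zsqrtd.re_mul, Zsqrtd.im_mul, gi, Zsqrtd.re_intCast, Zsqrtd.im_intCast]
      ring
  have hpow : (z + gi) ^ (p - 1) = (((-2 * δ) ^ k : ℤ) : GaussianInt) * gi ^ k := by
    have h2k : p - 1 = 2 * k := by omega
    rw [h2k, pow_mul, hsq, mul_pow]
    push_cast
    ring
  have hdPeval : (derivative P).eval z
      = (((p : ℤ) * (-2 * δ) ^ k : ℤ) : GaussianInt) * (gu * gi ^ k) := by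
    rw [hPdef, derivative_C_mul, derivative_pow, derivative_X_add_C, mul_one]
    rw [eval_mul, eval_mul, eval_C, eval_C, eval_pow, eval_add, eval_X, eval_C]
    rw [hpow]
    push_cast
    ring
  have hHval : Hx.eval (-δ) = (p : ℤ) * (-2 * δ) ^ k * (gu * gi ^ k).im := by
    rw [hHeval, hBdef, ← imPoly_derivative, imPoly_eval, ← hzdef, hdPeval, int_mul_im]
  have he : (gu * gi ^ k).im = 1 ∨ (gu * gi ^ k).im = -1 := by
    have h4 : k % 4 = 0 ∨ k % 4 = 1 ∨ k % 4 = 2 ∨ k % 4 = 3 := by omega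
    rw [gi_pow_mod]
    rcases h4 with h | h | h | h <;> rw [h] <;> decide
  have hnotsq : ¬ ((p : ℤ) ^ 2 ∣ Hx.eval (-δ)) := by
    rw [hHval]
    intro hdvd
    have hp0 : (p : ℤ) ≠ 0 := by exact_mod_cast hp.ne_zero
    have hpd : (p : ℤ) ∣ (-2 * δ) ^ k * (gu * gi ^ k).im := by
      have h1 : (p : ℤ) * (p : ℤ) ∣ (p : ℤ) * ((-2 * δ) ^ k * (gu * gi ^ k).im) := by
        rw [← sq, ← mul_assoc]; exact hdvd
      exact (mul_dvd_mul_iff_left hp0).1 h1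
    have hpd2 : (p : ℤ) ∣ (-2 * δ) ^ k := by
      rcases he with h | h <;> rw [h] at hpd <;> simpa using hpd
    have hpd3 : (p : ℤ) ∣ -2 * δ := hppi.dvd_of_dvd_pow hpd2
    have hpd4 : (p : ℤ) ∣ 2 := by
      have h2 : (-2 * δ) * (-δ) = 2 := by
        rcases hδ2 with h | h <;> rw [h] <;> ring
      have := hpd3.mul_right (-δ)
      rwa [h2] at this
    have h5 := Int.le_of_dvd (by norm_num) hpd4
    have h6 : (3 : ℤ) ≤ p := by exact_mod_cast hp3
    omega
  -- Eisenstein's criterion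
  have hEis : q.IsEisensteinAt (Ideal.span {(p : ℤ)}) := by
    refine ⟨?_, ?_, ?_⟩
    · rw [hqmonic.leadingCoeff, Ideal.mem_span_singleton]
      intro h
      exact hppi.not_unit (isUnit_of_dvd_one h)
    · intro n hn
      rw [hqdeg] at hn
      exact Ideal.mem_span_singleton.2 (hqcoeff n hn)
    · rw [Ideal.span_singleton_pow, Ideal.mem_span_singleton, hq0]
      exact hnotsq
  have hppr : (Ideal.span {(p : ℤ)}).IsPrime :=
    (Ideal.span_singleton_prime (by exact_mod_cast hp.ne_zero)).2 hppi
  have hqirr : Irreducible q := hEis.irreducible hppr hqmonic.isPrimitive (by rw [hqdeg]; omega)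
  have hqirrQ : Irreducible (q.map (Int.castRingHom ℚ)) := by
    have := (hqmonic.irreducible_iff_irreducible_map_fraction_map (K := ℚ)).1 hqirr
    rwa [algebraMap_int_eq] at this
  refine ⟨hdeg, ?_⟩
  have hcomp : Hx.map (Int.castRingHom ℚ)
      = (q.map (Int.castRingHom ℚ)).comp (X + C ((δ : ℚ))) := by
    rw [hqdef, Polynomial.map_comp, Polynomial.map_sub, map_X, map_C, comp_assoc]
    have h1 : ((X : Polynomial ℚ) - C ((Int.castRingHom ℚ) δ)).comp (X + C ((δ : ℚ))) = X := by
      rw [sub_comp, X_comp, C_comp]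
      have : ((Int.castRingHom ℚ) δ) = ((δ : ℚ)) := rfl
      rw [this]; ring
    rw [h1, comp_X]
  rw [hcomp, comp_eq_aeval, ← algEquivAevalXAddC_apply]
  exact hqirrQ.map _
end

section
/- Let p and q be odd primes, m ≥ 1 an integer, and k an integer with 0 ≤ k ≤ m. Suppose there exist coprime integers u, v and a sign ε ∈ {1, −1} such that u + δ4·v = ε·q^k and H_p(u,v) = ε·q^(m−k). Then k = 0, or (k = m and p ≠ q), or (k = m − 1 and p = q). -/
open Finset in
lemma ring_decomp {R : Type*} [CommRing R] (p n : ℕ) (hp : p.Prime) (hpn : p = n + 3) (x y : R) :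
    ∃ D1 D2 : R, (x + y) ^ p =
      y ^ p + p * y ^ (p - 1) * x + x ^ 2 * ((p : R) * D1 + x * D2) := by
  refine ⟨∑ j ∈ range (n + 1), x ^ j * y ^ (n + 1 - j) * ((p.choose (j + 2) / p : ℕ) : R), x ^ n, ?_⟩
  subst hpn
  rw [add_pow]
  rw [show n + 3 + 1 = (n+3)+1 from rfl, Finset.sum_range_succ']
  rw [Finset.sum_range_succ' (fun i => x ^ (i+1) * y ^ (n + 3 - (i+1)) * ((n+3).choose (i+1) : R)) (n+2)]
  rw [Finset.sum_range_succ]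
  have hterm : ∀ i ∈ range (n+1),
      x ^ (i+1+1) * y ^ (n + 3 - (i+1+1)) * (((n+3).choose (i+1+1) : ℕ) : R)
      = x ^ 2 * ((n+3 : ℕ) * (x ^ i * y ^ (n + 1 - i) * (((n+3).choose (i + 2) / (n+3) : ℕ) : R))) := by
    intro i hi
    simp only [mem_range] at hi
    have hd : (n+3) ∣ (n+3).choose (i+2) := hp.dvd_choose_self (by omega) (by omega)
    have hc : (((n+3).choose (i+2) : ℕ) : R) = ((n+3 : ℕ) : R) * (((n+3).choose (i+2) / (n+3) : ℕ) : R) := by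
      rw [← Nat.cast_mul, Nat.mul_div_cancel' hd]
    have he : n + 3 - (i+1+1) = n + 1 - i := by omega
    rw [hc, he]
    ring
  rw [Finset.sum_congr rfl hterm, ← Finset.mul_sum]
  simp only [Nat.choose_zero_right, Nat.choose_one_right, pow_zero, Nat.sub_zero, Nat.cast_one]
  have : n + 3 - (n + 2 + 1 + 1) = 0 := by omega
  push_cast
  rw [← Finset.mul_sum]
  have h2 : (n+3).choose (n+1+1+1) = 1 := by
    have : n+1+1+1 = n+3 := by omega
    rw [this, Nat.choose_self]
  rw [h2, Nat.sub_self, Nat.choose_one_right]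
  push_cast
  ring

lemma im_int_mul (n : ℤ) (z : GaussianInt) :
    ((⟨1,1⟩ : GaussianInt) * ((n : GaussianInt) * z)).im = n * ((⟨1,1⟩ : GaussianInt) * z).im := by
  rw [mul_left_comm]
  simp [Zsqrtd.im_mul, Zsqrtd.re_intCast, Zsqrtd.im_intCast]

lemma zeta_vals (p : ℕ) (hop : Odd p) :
    ∃ s : ℤ, (s = 1 ∨ s = -1) ∧
      ((⟨1,1⟩ : GaussianInt) * (⟨-(d4 p), 1⟩ : GaussianInt) ^ (p-1)).im = s * 2 ^ ((p-1)/2) ∧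
      ((⟨1,1⟩ : GaussianInt) * (⟨-(d4 p), 1⟩ : GaussianInt) ^ p).im = 0 := by
  obtain ⟨c, ρ, hρ, hpc⟩ : ∃ c ρ, (ρ = 1 ∨ ρ = 3 ∨ ρ = 5 ∨ ρ = 7) ∧ p = 8 * c + ρ := by
    refine ⟨p / 8, p % 8, ?_, ?_⟩
    · rcases hop with ⟨t, ht⟩; omega
    · omega
  subst hpc
  have h16 : ∀ ζ : GaussianInt, ζ.re = -(d4 (8*c+ρ)) → ζ.im = 1 →
      ζ ^ (8*c) = ((16^c : ℤ) : GaussianInt) := by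
    intro ζ h1 h2
    have hd : d4 (8*c+ρ) = 1 ∨ d4 (8*c+ρ) = -1 := by unfold d4; split <;> simp
    have hsq : ζ * ζ = ⟨0, -2 * d4 (8*c+ρ)⟩ := by
      ext <;> simp [Zsqrtd.re_mul, Zsqrtd.im_mul, h1, h2] <;> rcases hd with h|h <;> rw [h] <;> ring
    have h8 : ζ ^ 8 = ((16:ℤ) : GaussianInt) := by
      calc ζ ^ 8 = (ζ*ζ)*(ζ*ζ)*((ζ*ζ)*(ζ*ζ)) := by ring
      _ = ((16:ℤ) : GaussianInt) := by
          rw [hsq]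
          ext <;> simp [Zsqrtd.re_mul, Zsqrtd.im_mul, Zsqrtd.re_intCast, Zsqrtd.im_intCast] <;>
            rcases hd with h|h <;> rw [h] <;> ring
    rw [pow_mul, h8, ← Int.cast_pow]
  rcases hρ with h|h|h|h <;> subst h
  -- case ρ = 1
  · have hd : d4 (8*c+1) = 1 := by unfold d4; rw [if_pos (by omega)]
    refine ⟨1, Or.inl rfl, ?_, ?_⟩
    · have he : 8*c+1-1 = 8*c := by omega
      rw [he, h16 _ (by simp [hd]) rfl, show (8*c)/2 = 4*c from by omega]
      rw [show ((⟨1,1⟩:GaussianInt) * ((16^c : ℤ) : GaussianInt)).im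
            = 16^c * ((⟨1,1⟩:GaussianInt) * 1).im from by
          rw [← mul_one ((16^c : ℤ) : GaussianInt)]; exact im_int_mul _ 1]
      simp [Zsqrtd.im_mul]
      rw [show (16:ℤ) = 2^4 from by norm_num, ← pow_mul]
    · rw [show 8*c+1 = 8*c + 1 from rfl, pow_add, h16 _ (by simp [hd]) rfl, pow_one, im_int_mul]
      simp [Zsqrtd.im_mul, hd]
  -- case ρ = 3
  · have hd : d4 (8*c+3) = -1 := by unfold d4; rw [if_neg (by omega)]
    have hz2 : (⟨-(d4 (8*c+3)), 1⟩ : GaussianInt)^2 = ⟨0, 2⟩ := by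
      rw [hd]; ext <;> simp [pow_two, Zsqrtd.re_mul, Zsqrtd.im_mul]
    have hz3 : (⟨-(d4 (8*c+3)), 1⟩ : GaussianInt)^3 = ⟨-2, 2⟩ := by
      rw [pow_succ, hz2, hd]; ext <;> simp [Zsqrtd.re_mul, Zsqrtd.im_mul]
    refine ⟨1, Or.inl rfl, ?_, ?_⟩
    · rw [show 8*c+3-1 = 8*c + 2 from by omega, pow_add, h16 _ rfl rfl, hz2, im_int_mul]
      rw [show (8*c+2)/2 = 4*c+1 from by omega]
      simp [Zsqrtd.im_mul]
      rw [show (16:ℤ) = 2^4 from by norm_num, ← pow_mul]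
      ring
    · rw [show 8*c+3 = 8*c + 3 from rfl, pow_add, h16 _ rfl rfl, hz3, im_int_mul]
      simp [Zsqrtd.im_mul]
  -- case ρ = 5
  · have hd : d4 (8*c+5) = 1 := by unfold d4; rw [if_pos (by omega)]
    have hz2 : (⟨-(d4 (8*c+5)), 1⟩ : GaussianInt)^2 = ⟨0, -2⟩ := by
      rw [hd]; ext <;> simp [pow_two, Zsqrtd.re_mul, Zsqrtd.im_mul]
    have hz4 : (⟨-(d4 (8*c+5)), 1⟩ : GaussianInt)^4 = ⟨-4, 0⟩ := by
      rw [show 4 = 2*2 from rfl, pow_mul, hz2]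
      ext <;> simp [pow_two, Zsqrtd.re_mul, Zsqrtd.im_mul]
    have hz5 : (⟨-(d4 (8*c+5)), 1⟩ : GaussianInt)^5 = ⟨4, -4⟩ := by
      rw [pow_succ, hz4, hd]; ext <;> simp [Zsqrtd.re_mul, Zsqrtd.im_mul]
    refine ⟨-1, Or.inr rfl, ?_, ?_⟩
    · rw [show 8*c+5-1 = 8*c + 4 from by omega, pow_add, h16 _ rfl rfl, hz4, im_int_mul]
      rw [show (8*c+4)/2 = 4*c+2 from by omega]
      simp [Zsqrtd.im_mul]
      rw [show (16:ℤ) = 2^4 from by norm_num, ← pow_mul]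
      ring
    · rw [show 8*c+5 = 8*c + 5 from rfl, pow_add, h16 _ rfl rfl, hz5, im_int_mul]
      simp [Zsqrtd.im_mul]
  -- case ρ = 7
  · have hd : d4 (8*c+7) = -1 := by unfold d4; rw [if_neg (by omega)]
    have hz2 : (⟨-(d4 (8*c+7)), 1⟩ : GaussianInt)^2 = ⟨0, 2⟩ := by
      rw [hd]; ext <;> simp [pow_two, Zsqrtd.re_mul, Zsqrtd.im_mul]
    have hz6 : (⟨-(d4 (8*c+7)), 1⟩ : GaussianInt)^6 = ⟨0, -8⟩ := by
      rw [show 6 = 2*3 from rfl, pow_mul, hz2]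
      rw [show (3:ℕ) = 2+1 from rfl, pow_succ, pow_two]
      ext <;> simp [Zsqrtd.re_mul, Zsqrtd.im_mul]
    have hz7 : (⟨-(d4 (8*c+7)), 1⟩ : GaussianInt)^7 = ⟨8, -8⟩ := by
      rw [pow_succ, hz6, hd]; ext <;> simp [Zsqrtd.re_mul, Zsqrtd.im_mul]
    refine ⟨-1, Or.inr rfl, ?_, ?_⟩
    · rw [show 8*c+7-1 = 8*c + 6 from by omega, pow_add, h16 _ rfl rfl, hz6, im_int_mul]
      rw [show (8*c+6)/2 = 4*c+3 from by omega]
      simp [Zsqrtd.im_mul]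
      rw [show (16:ℤ) = 2^4 from by norm_num, ← pow_mul]
      ring
    · rw [show 8*c+7 = 8*c + 7 from rfl, pow_add, h16 _ rfl rfl, hz7, im_int_mul]
      simp [Zsqrtd.im_mul]

lemma icast_mul_im (a : ℤ) (z : GaussianInt) : ((a : GaussianInt) * z).im = a * z.im := by
  simp [Zsqrtd.im_mul, Zsqrtd.re_intCast, Zsqrtd.im_intCast]

lemma ncast_mul_im (a : ℕ) (z : GaussianInt) : ((a : GaussianInt) * z).im = (a : ℤ) * z.im := by
  simp [Zsqrtd.im_mul, Zsqrtd.re_natCast, Zsqrtd.im_natCast]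

lemma main_decomp (p n : ℕ) (hp : p.Prime) (hop : Odd p) (hpn : p = n + 3) (u v : ℤ) :
    ∃ s X Y : ℤ, (s = 1 ∨ s = -1) ∧
      Gfun p u v = (u + d4 p * v) *
        (s * 2 ^ ((p-1)/2) * (p:ℤ) * v ^ (p-1)
          + (u + d4 p * v) * ((p:ℤ) * X + (u + d4 p * v) * Y)) := by
  set δ := d4 p with hδdef
  set t : ℤ := u + δ * v with htdef
  set ζ : GaussianInt := ⟨-δ, 1⟩ with hζdef
  obtain ⟨D1, D2, hD⟩ := ring_decomp p n hp hpn ((t : GaussianInt)) ((v : GaussianInt) * ζ)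
  obtain ⟨s, hs, hs1, hs2⟩ := zeta_vals p hop
  refine ⟨s, ((⟨1,1⟩ : GaussianInt) * D1).im, ((⟨1,1⟩ : GaussianInt) * D2).im, hs, ?_⟩
  have h1 : (⟨u, v⟩ : GaussianInt) = (t : GaussianInt) + (v : GaussianInt) * ζ := by
    ext <;> simp [hζdef, Zsqrtd.re_mul, Zsqrtd.im_mul, Zsqrtd.re_intCast, Zsqrtd.im_intCast,
      htdef] <;> ring
  have h2 : (⟨1,1⟩ : GaussianInt) * (⟨u, v⟩ : GaussianInt) ^ p
      = ((v ^ p : ℤ) : GaussianInt) * ((⟨1,1⟩ : GaussianInt) * ζ ^ p)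
        + (((p : ℤ) * v ^ (p-1) * t : ℤ) : GaussianInt) * ((⟨1,1⟩ : GaussianInt) * ζ ^ (p-1))
        + ((t ^ 2 : ℤ) : GaussianInt) *
            ((p : GaussianInt) * ((⟨1,1⟩ : GaussianInt) * D1)
              + ((t : ℤ) : GaussianInt) * ((⟨1,1⟩ : GaussianInt) * D2)) := by
    rw [h1, hD]
    push_cast
    ring
  have h3 := congrArg Zsqrtd.im h2
  simp only [Zsqrtd.im_add, icast_mul_im, ncast_mul_im] at h3
  rw [Gfun, h3, hs1, hs2]
  ring

theorem k_eq_zero_or_m (p q m k : ℕ) (hp : Nat.Prime p) (hop : Odd p)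
    (hq : Nat.Prime q) (hoq : Odd q) (hm : 1 ≤ m) (hk : k ≤ m)
    (u v : ℤ) (hcop : IsCoprime u v) (ε : ℤ) (hε : ε = 1 ∨ ε = -1)
    (h1 : u + d4 p * v = ε * (q : ℤ) ^ k)
    (h2 : Hfun p u v = ε * (q : ℤ) ^ (m - k)) :
    k = 0 ∨ (k = m ∧ p ≠ q) ∨ (k = m - 1 ∧ p = q) := by
  obtain ⟨n, hpn⟩ : ∃ n, p = n + 3 := by
    rcases hop with ⟨w, hw⟩; have := hp.two_le; exact ⟨p - 3, by omega⟩
  obtain ⟨s, X, Y, hs, hG⟩ := main_decomp p n hp hop hpn u v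
  have hqZ : Prime (q : ℤ) := Nat.prime_iff_prime_int.mp hq
  have hpZ : Prime (p : ℤ) := Nat.prime_iff_prime_int.mp hp
  have hεu : IsUnit ε := by
    rcases hε with rfl | rfl
    · exact isUnit_one
    · exact isUnit_one.neg
  have ht0 : u + d4 p * v ≠ 0 := by
    rw [h1]
    exact mul_ne_zero (hεu.ne_zero) (pow_ne_zero _ (by exact_mod_cast hq.ne_zero))
  have hH : Hfun p u v = s * 2 ^ ((p-1)/2) * (p:ℤ) * v ^ (p-1)
      + (u + d4 p * v) * ((p:ℤ) * X + (u + d4 p * v) * Y) := by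
    rw [Hfun, hG, Int.mul_ediv_cancel_left _ ht0]
  by_cases hk0 : k = 0
  · exact Or.inl hk0
  -- now k ≥ 1
  have hqt : (q:ℤ) ∣ (u + d4 p * v) := by
    rw [h1]; exact Dvd.dvd.mul_left (dvd_pow_self _ hk0) ε
  have hqv : ¬ (q:ℤ) ∣ v := by
    intro hv
    have hu : (q:ℤ) ∣ u := by
      have h' : u = (u + d4 p * v) - d4 p * v := by ring
      rw [h']; exact dvd_sub hqt (hv.mul_left _)
    exact hqZ.not_unit (hcop.isUnit_of_dvd' hu hv)
  -- a generic splitting fact for a prime ℓ dividing the "A" term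
  have hsplit : ∀ ℓ : ℕ, ℓ.Prime → Odd ℓ → ¬ (ℓ:ℤ) ∣ v →
      (ℓ:ℤ) ∣ s * 2 ^ ((p-1)/2) * v ^ (p-1) → False := by
    intro ℓ hℓ hoℓ hℓv hdvd
    have hℓZ : Prime (ℓ : ℤ) := Nat.prime_iff_prime_int.mp hℓ
    rcases (hℓZ.dvd_mul.mp hdvd) with h' | h'
    · rcases hℓZ.dvd_mul.mp h' with h'' | h''
      · rcases hs with rfl | rfl
        · exact hℓZ.not_unit (isUnit_of_dvd_one h'')
        · exact hℓZ.not_unit (isUnit_of_dvd_one ((dvd_neg).mp h''))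
      · have h2' : (ℓ:ℤ) ∣ (2:ℤ) := hℓZ.dvd_of_dvd_pow h''
        have : ℓ ∣ 2 := by exact_mod_cast h2'
        have := (Nat.prime_dvd_prime_iff_eq hℓ Nat.prime_two).mp this
        rw [this] at hoℓ; exact (by decide : ¬ Odd 2) hoℓ
    · exact hℓv (hℓZ.dvd_of_dvd_pow h')
  by_cases hpq : p = q
  · -- p = q : show k = m - 1
    subst hpq
    right; right
    refine ⟨?_, rfl⟩
    have hpv : ¬ (p:ℤ) ∣ v := hqv
    have hpH : (p:ℤ) ∣ Hfun p u v := by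
      rw [hH]
      exact dvd_add ⟨s * 2 ^ ((p-1)/2) * v ^ (p-1), by ring⟩ (dvd_mul_of_dvd_left hqt _)
    have hmk0 : m - k ≠ 0 := by
      intro h0
      rw [h2, h0, pow_zero, mul_one] at hpH
      exact hpZ.not_unit (isUnit_of_dvd_unit hpH hεu)
    have hmk1 : m - k = 1 := by
      by_contra hne
      have h2le : 2 ≤ m - k := by omega
      have hd : ((p:ℤ))^2 ∣ Hfun p u v := by
        rw [h2]
        exact dvd_mul_of_dvd_right (pow_dvd_pow _ h2le) ε
      have hA2 : ((p:ℤ))^2 ∣ (u + d4 p * v) * ((p:ℤ) * X + (u + d4 p * v) * Y) := by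
        rw [pow_two]
        exact mul_dvd_mul hqt (dvd_add (dvd_mul_right _ _) (dvd_mul_of_dvd_left hqt _))
      have hA : ((p:ℤ))^2 ∣ s * 2 ^ ((p-1)/2) * (p:ℤ) * v ^ (p-1) := by
        have h' := dvd_sub hd hA2
        rwa [hH, add_sub_cancel_right] at h'
      have hA' : (p:ℤ) ∣ s * 2 ^ ((p-1)/2) * v ^ (p-1) := by
        have hrw : s * 2 ^ ((p-1)/2) * (p:ℤ) * v ^ (p-1)
            = (p:ℤ) * (s * 2 ^ ((p-1)/2) * v ^ (p-1)) := by ring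
        rw [hrw, pow_two] at hA
        exact (mul_dvd_mul_iff_left (by exact_mod_cast hp.ne_zero : (p:ℤ) ≠ 0)).mp hA
      exact hsplit p hp hop hpv hA'
    omega
  · -- p ≠ q : show k = m
    right; left
    refine ⟨?_, hpq⟩
    by_contra hkm
    have hmk : m - k ≠ 0 := by omega
    have hqH : (q:ℤ) ∣ Hfun p u v := by
      rw [h2]; exact Dvd.dvd.mul_left (dvd_pow_self _ hmk) ε
    have hqA : (q:ℤ) ∣ s * 2 ^ ((p-1)/2) * (p:ℤ) * v ^ (p-1) := by
      have h' := dvd_sub hqH (dvd_mul_of_dvd_left hqt ((p:ℤ) * X + (u + d4 p * v) * Y))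
      rwa [hH, add_sub_cancel_right] at h'
    rcases hqZ.dvd_mul.mp hqA with h' | h'
    · rcases hqZ.dvd_mul.mp h' with h'' | h''
      · exact hsplit q hq hoq hqv (dvd_mul_of_dvd_left h'' _)
      · have : q ∣ p := by exact_mod_cast h''
        exact hpq ((Nat.prime_dvd_prime_iff_eq hq hp).mp this).symm
    · exact hqv (hqZ.dvd_of_dvd_pow h')
end

section
/- Let p be an odd prime and let α be a complex root of the polynomial H_p(X, 1). For a positive integer M let ζ_M = exp(2πi/M). Then ℚ(ζ_p + ζ_p⁻¹) is contained in ℚ(α), and ℚ(α) = ℚ(ζ_{4p} + ζ_{4p}⁻¹) as subfields of the complex numbers. -/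
open Polynomial Complex

noncomputable def Pc (p : ℕ) : Polynomial ℂ :=
  C (2*I)⁻¹ * (C (1+I) * (X + C I)^p - C (1-I) * (X - C I)^p)

lemma Pc_eval (p : ℕ) (z : ℂ) :
    (Pc p).eval z = (2*I)⁻¹ * ((1+I)*(z+I)^p - (1-I)*(z-I)^p) := by
  simp [Pc]

lemma Pc_eval_int (p : ℕ) (a : ℤ) : (Pc p).eval (a:ℂ) = ((Gfun p a 1 : ℤ) : ℂ) := by
  set u : GaussianInt := (⟨1, 1⟩ : GaussianInt) * (⟨a, 1⟩ : GaussianInt) ^ p with hu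
  have h1 : GaussianInt.toComplex u = (1+I)*((a:ℂ)+I)^p := by
    rw [hu, map_mul, map_pow, GaussianInt.toComplex_def, GaussianInt.toComplex_def]
    push_cast
    ring
  have h2 : (starRingEnd ℂ) (GaussianInt.toComplex u) = (1-I)*((a:ℂ)-I)^p := by
    rw [h1, map_mul, map_pow, map_add, map_add, Complex.conj_I]
    simp
    ring
  have h3 := Complex.sub_conj (GaussianInt.toComplex u)
  have h4 : (GaussianInt.toComplex u).im = (u.im : ℝ) := by
    rw [GaussianInt.toComplex_def]; simp
  rw [h2, h4, h1] at h3
  rw [Pc_eval, h3]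
  have : (I : ℂ) ≠ 0 := Complex.I_ne_zero
  push_cast
  field_simp
  simp only [Gfun]
  ring

lemma Pc_factor (p : ℕ) (Hx : Polynomial ℤ)
    (hHx : ∀ a : ℤ, Gfun p a 1 = (a + d4 p) * Hx.eval a) :
    Pc p = (X + C ((d4 p : ℤ) : ℂ)) * (Hx.map (Int.castRingHom ℂ)) := by
  apply Polynomial.eq_of_infinite_eval_eq
  apply Set.Infinite.mono (s := Set.range (fun a : ℤ => (a:ℂ)))
  · rintro _ ⟨a, rfl⟩
    simp only [Set.mem_setOf_eq]
    rw [Pc_eval_int, eval_mul, eval_add, eval_X, eval_C, Polynomial.eval_intCast_map,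
      hHx a]
    push_cast
    simp only [eq_intCast]
  · exact Set.infinite_range_of_injective (fun x y h => by exact_mod_cast h)

lemma Pc_deriv_eval (p : ℕ) (z : ℂ) :
    (Polynomial.derivative (Pc p)).eval z
      = (2*I)⁻¹ * ((1+I)*((p:ℂ)*(z+I)^(p-1)) - (1-I)*((p:ℂ)*(z-I)^(p-1))) := by
  simp [Pc, derivative_mul, derivative_pow, derivative_X, derivative_C]

lemma Isq : (Complex.I)^2 = -1 := Complex.I_sq

lemma Pc_deriv_ne (p : ℕ) (hp : Nat.Prime p) (hop : Odd p) :
    (Polynomial.derivative (Pc p)).eval (-((d4 p : ℤ):ℂ)) ≠ 0 := by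
  have hp0 : (p:ℂ) ≠ 0 := Nat.cast_ne_zero.mpr hp.pos.ne'
  have h2 : p % 2 = 1 := Nat.odd_iff.mp hop
  have h4 : p % 4 = 1 ∨ p % 4 = 3 := by omega
  rw [Pc_deriv_eval]
  rcases h4 with h4 | h4
  · -- δ = 1, p - 1 = 4t
    obtain ⟨t, ht⟩ : ∃ t, p - 1 = 4 * t := ⟨p/4, by omega⟩
    have hδ : (d4 p : ℂ) = 1 := by simp [d4, h4]
    rw [hδ, ht, pow_mul, pow_mul]
    have e1 : ((-1 + I):ℂ)^4 = -4 := by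
      linear_combination (I^2 - 4*I + 5) * Isq
    have e2 : ((-1 - I):ℂ)^4 = -4 := by
      linear_combination (I^2 + 4*I + 5) * Isq
    have : (-(1:ℂ) + I) = -1 + I := rfl
    rw [show (-(1:ℂ) + I) = -1 + I from rfl, show (-(1:ℂ) - I) = -1 - I from rfl, e1, e2]
    have : (2*I)⁻¹ * ((1 + I) * ((p:ℂ) * (-4) ^ t) - (1 - I) * ((p:ℂ) * (-4) ^ t))
        = (p:ℂ) * (-4)^t := by
      field_simp
      ring
    rw [this]
    exact mul_ne_zero hp0 (pow_ne_zero _ (by norm_num))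
  · -- δ = -1, p - 1 = 2*(2t+1)
    obtain ⟨t, ht⟩ : ∃ t, p - 1 = 2 * (2 * t + 1) := ⟨p/4, by omega⟩
    have hδ : (d4 p : ℂ) = -1 := by simp [d4, h4, show ¬ (p % 4 = 1) by omega]
    rw [hδ, ht, pow_mul, pow_mul]
    rw [show (-(-1:ℂ) + I) = 1 + I from by ring, show (-(-1:ℂ) - I) = 1 - I from by ring]
    have e1 : ((1 + I):ℂ)^2 = 2*I := by linear_combination Isq
    have e2 : ((1 - I):ℂ)^2 = -(2*I) := by linear_combination Isq
    rw [e1, e2, Odd.neg_pow ⟨t, by ring⟩]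
    have : (2*I)⁻¹ * ((1 + I) * ((p:ℂ) * (2*I) ^ (2*t+1)) - (1 - I) * ((p:ℂ) * (-((2*I) ^ (2*t+1)))))
        = (p:ℂ) * (2*I)^(2*t) * 2 := by
      rw [pow_succ]
      field_simp
      ring
    rw [this]
    exact mul_ne_zero (mul_ne_zero hp0 (pow_ne_zero _ (by simp [Complex.I_ne_zero]))) two_ne_zero

lemma cheb_mem (F : IntermediateField ℚ ℂ) {u : ℂ} (hu : u ≠ 0)
    (h1 : u + u⁻¹ ∈ F) : ∀ j : ℕ, u^j + (u^j)⁻¹ ∈ F := by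
  have key : ∀ j : ℕ, u^j + (u^j)⁻¹ ∈ F ∧ u^(j+1) + (u^(j+1))⁻¹ ∈ F := by
    intro j
    induction j with
    | zero =>
      refine ⟨?_, by simpa using h1⟩
      simp only [pow_zero, inv_one]
      exact F.add_mem F.one_mem F.one_mem
    | succ n ih =>
      refine ⟨ih.2, ?_⟩
      have hpow : ∀ k : ℕ, u ^ k ≠ 0 := fun k => pow_ne_zero k hu
      have hident : u^(n+2) + (u^(n+2))⁻¹
          = (u + u⁻¹) * (u^(n+1) + (u^(n+1))⁻¹) - (u^n + (u^n)⁻¹) := by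
        field_simp
        ring
      rw [hident]
      exact F.sub_mem (F.mul_mem h1 ih.2) ih.1
  exact fun j => (key j).1

open IntermediateField Polynomial Complex in
theorem Hp_root_field (p : ℕ) (hp : Nat.Prime p) (hop : Odd p)
    (Hx : Polynomial ℤ)
    (hHx : ∀ a : ℤ, Gfun p a 1 = (a + d4 p) * Hx.eval a)
    (α : ℂ) (hα : Polynomial.aeval α Hx = 0) :
    adjoin ℚ {Complex.exp (2 * (Real.pi : ℂ) * Complex.I / (p : ℂ)) +
        (Complex.exp (2 * (Real.pi : ℂ) * Complex.I / (p : ℂ)))⁻¹} ≤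
      adjoin ℚ {α} ∧
    adjoin ℚ {α} =
      adjoin ℚ {Complex.exp (2 * (Real.pi : ℂ) * Complex.I / ((4 * p : ℕ) : ℂ)) +
        (Complex.exp (2 * (Real.pi : ℂ) * Complex.I / ((4 * p : ℕ) : ℂ)))⁻¹} := by
  have hp1 : 1 < p := hp.one_lt
  have hp0 : (p:ℂ) ≠ 0 := Nat.cast_ne_zero.mpr hp.pos.ne'
  have h2 : p % 2 = 1 := Nat.odd_iff.mp hop
  have h2I : (2*I:ℂ) ≠ 0 := by simp [Complex.I_ne_zero]
  set δ : ℂ := ((d4 p : ℤ) : ℂ) with hδdef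
  have hfac : Pc p = (X + C δ) * (Hx.map (Int.castRingHom ℂ)) := Pc_factor p Hx hHx
  have hQα : (Hx.map (Int.castRingHom ℂ)).eval α = 0 := by
    rw [Polynomial.eval_map]
    simpa [Polynomial.aeval_def] using hα
  have hPα : (Pc p).eval α = 0 := by rw [hfac]; simp [hQα]
  have hkey : (1+I)*(α+I)^p = (1-I)*(α-I)^p := by
    rw [Pc_eval] at hPα
    rcases mul_eq_zero.mp hPα with h | h
    · exact absurd h (inv_ne_zero h2I)
    · exact sub_eq_zero.mp h
  -- exclusion of the removed root
  have hne : α ≠ -δ := by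
    intro hcon
    have hQ : (Hx.map (Int.castRingHom ℂ)).eval (-δ) = 0 := by rw [← hcon]; exact hQα
    apply Pc_deriv_ne p hp hop
    rw [hfac, derivative_mul]
    simp [hQ, ← hδdef]
  -- α ≠ ± I
  have h1I : (1+I:ℂ) ≠ 0 := by simp [Complex.ext_iff]
  have h1I' : (1-I:ℂ) ≠ 0 := by simp [Complex.ext_iff]
  have hαI : α - I ≠ 0 := by
    intro h
    rw [sub_eq_zero] at h
    rw [h] at hkey
    simp only [sub_self, zero_pow hp.pos.ne', mul_zero] at hkey
    have h2I' : (I + I : ℂ) ≠ 0 := by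
      intro hc
      rw [Complex.ext_iff] at hc
      simp at hc
    exact mul_ne_zero h1I (pow_ne_zero _ h2I') hkey
  have hαI' : α + I ≠ 0 := by
    intro h
    have h' : α = -I := by linear_combination h
    rw [h'] at hkey
    simp only [neg_add_cancel, zero_pow hp.pos.ne', mul_zero] at hkey
    have hnII : (-I - I : ℂ) ≠ 0 := by
      intro hc
      rw [Complex.ext_iff] at hc
      norm_num at hc
    exact mul_ne_zero h1I' (pow_ne_zero _ hnII) hkey.symm
  set w : ℂ := (α + I)/(α - I) with hwdef
  have hw0 : w ≠ 0 := div_ne_zero hαI' hαI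
  have hwinv : w⁻¹ = (α - I)/(α + I) := by rw [hwdef, inv_div]
  have hwp : w^p = -I := by
    rw [hwdef, div_pow, div_eq_iff (pow_ne_zero _ hαI)]
    linear_combination ((1-I)/2) * hkey + (((α+I)^p + (α-I)^p)/2) * Isq
  have hw4 : w^(4*p) = 1 := by
    rw [mul_comm, pow_mul, hwp]
    linear_combination (I^2 - 1) * Isq
  have hw1 : w ≠ 1 := by
    intro h
    rw [hwdef, div_eq_one_iff_eq hαI] at h
    have : (2*I:ℂ) = 0 := by linear_combination h
    exact h2I this
  have hI4 : (I:ℂ)^4 = 1 := by linear_combination (I^2 - 1) * Isq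
  have hwI : w ≠ I := by
    intro h
    -- then I^p = -I, so p % 4 = 3
    have hIp : (I:ℂ)^p = -I := by
      have := hwp
      rw [h] at this
      exact this
    obtain ⟨t, ht⟩ : ∃ t, p = 4*t + p % 4 := ⟨p/4, (Nat.div_add_mod p 4).symm⟩
    have h43 : p % 4 = 3 := by
      rcases (by omega : p % 4 = 1 ∨ p % 4 = 3) with h4 | h4
      · exfalso
        rw [ht, h4, pow_add, pow_mul, hI4, one_pow, one_mul, pow_one] at hIp
        have : (2*I:ℂ) = 0 := by linear_combination hIp
        exact h2I this
      · exact h4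
    -- α = 1 = -δ
    have hδ1 : δ = -1 := by simp [hδdef, d4, show ¬ (p % 4 = 1) by omega]
    have hα1 : α = 1 := by
      rw [hwdef, div_eq_iff hαI] at h
      apply mul_left_cancel₀ h1I'
      linear_combination h - Isq
    exact hne (by rw [hα1, hδ1]; norm_num)
  have hwI' : w ≠ -I := by
    intro h
    have hIp : ((-I):ℂ)^p = -I := by
      have := hwp
      rw [h] at this
      exact this
    obtain ⟨t, ht⟩ : ∃ t, p = 4*t + p % 4 := ⟨p/4, (Nat.div_add_mod p 4).symm⟩
    have hI4' : ((-I):ℂ)^4 = 1 := by linear_combination (I^2-1) * Isq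
    have h41 : p % 4 = 1 := by
      rcases (by omega : p % 4 = 1 ∨ p % 4 = 3) with h4 | h4
      · exact h4
      · exfalso
        rw [ht, h4, pow_add, pow_mul, hI4', one_pow, one_mul] at hIp
        have : (2*I:ℂ) = 0 := by linear_combination hIp + I * Isq
        exact h2I this
    have hδ1 : δ = 1 := by simp [hδdef, d4, h41]
    have hα1 : α = -1 := by
      rw [hwdef, div_eq_iff hαI] at h
      apply mul_left_cancel₀ h1I
      linear_combination h + Isq
    exact hne (by rw [hα1, hδ1])
  have hwm1 : w ≠ -1 := by
    intro h
    rw [h, Odd.neg_pow hop, one_pow] at hwp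
    have : (1 - I : ℂ) ≠ 0 := h1I'
    exact this (by linear_combination -hwp)
  -- ζ setup
  set ζ : ℂ := Complex.exp (2 * (Real.pi : ℂ) * Complex.I / ((4 * p : ℕ) : ℂ)) with hζdef
  have h4p0 : (4*p : ℕ) ≠ 0 := by omega
  have hζprim : IsPrimitiveRoot ζ (4*p) := Complex.isPrimitiveRoot_exp (4*p) h4p0
  have hζ0 : ζ ≠ 0 := Complex.exp_ne_zero _
  have hζp : ζ^p = I := by
    rw [hζdef, ← Complex.exp_nat_mul]
    have harg : (p:ℂ) * (2 * (Real.pi:ℂ) * Complex.I / ((4*p : ℕ):ℂ)) = ↑(Real.pi/2) * I := by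
      push_cast
      field_simp
      ring
    rw [harg, Complex.exp_mul_I]
    push_cast
    simp
  haveI : NeZero (4*p) := ⟨h4p0⟩
  obtain ⟨m, hmlt, hwm⟩ := hζprim.eq_pow_of_pow_eq_one hw4
  -- m ≡ 3 mod 4
  have hζmp : ζ^((m+1)*p) = 1 := by
    have h1 : ζ^(m*p) = -I := by rw [pow_mul, hwm, hwp]
    calc ζ^((m+1)*p) = ζ^(m*p) * ζ^p := by rw [← pow_add, Nat.add_mul, one_mul]
    _ = -I * I := by rw [h1, hζp]
    _ = 1 := by linear_combination -Isq
  have hdvd : (4:ℕ) ∣ m + 1 := by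
    have := hζprim.dvd_of_pow_eq_one _ hζmp
    exact (Nat.mul_dvd_mul_iff_right hp.pos).mp this
  have hm43 : m % 4 = 3 := by omega
  have hpm : ¬ (p ∣ m) := by
    rintro ⟨t, hm⟩
    have htlt : t < 4 := by
      by_contra hc
      push_neg at hc
      have h4t : p * 4 ≤ p * t := Nat.mul_le_mul_left p hc
      rw [← hm] at h4t
      omega
    have hwt : w = I^t := by
      rw [← hwm, hm, pow_mul, hζp]
    interval_cases t
    · omega
    · exact hwI (by simpa using hwt)
    · omega
    · refine hwI' ?_
      rw [hwt]
      linear_combination I * Isq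
  have hcop : Nat.Coprime m (4*p) := by
    have hc2 : Nat.Coprime 2 m := (Nat.prime_two.coprime_iff_not_dvd).mpr (by omega)
    have hc4 : Nat.Coprime m 4 := by
      have := (hc2.symm.pow_right 2)
      simpa [show (2:ℕ)^2 = 4 by norm_num] using this
    have hcp : Nat.Coprime m p := (hp.coprime_iff_not_dvd.mpr hpm).symm
    exact hc4.mul_right hcp
  obtain ⟨k, -, hk⟩ := Nat.exists_mul_mod_eq_one_of_coprime hcop (by omega)
  have hζw : ζ = w^k := by
    rw [← hwm, ← pow_mul]
    have hmod := Nat.div_add_mod (m*k) (4*p)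
    rw [hk] at hmod
    have hexp : m*k = 4*p*(m*k/(4*p)) + 1 := by omega
    rw [hexp, pow_add, pow_mul, hζprim.pow_eq_one, one_pow, pow_one, one_mul]
  -- membership of w + w⁻¹ in adjoin ℚ {α}
  have hαA : α ∈ adjoin ℚ {α} := mem_adjoin_simple_self ℚ α
  have h2A : ∀ (F : IntermediateField ℚ ℂ), (2:ℂ) ∈ F := fun F => by
    have := F.add_mem F.one_mem F.one_mem
    rw [one_add_one_eq_two] at this
    exact this
  have hα2 : (α^2 + 1 : ℂ) ≠ 0 := by
    intro h
    have hfa : (α - I)*(α + I) = 0 := by linear_combination h - Isq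
    rcases mul_eq_zero.mp hfa with h' | h'
    · exact hαI h'
    · exact hαI' h'
  have hA1 : w + w⁻¹ ∈ adjoin ℚ {α} := by
    have hval : w + w⁻¹ = (2*α^2 - 2) * (α^2+1)⁻¹ := by
      rw [hwdef, inv_div]
      field_simp
      linear_combination (4*α^2) * Isq
    rw [hval]
    refine mul_mem ?_ (inv_mem ?_)
    · exact sub_mem (mul_mem (h2A _) (pow_mem hαA 2)) (h2A _)
    · exact add_mem (pow_mem hαA 2) (one_mem _)
  have hwk : ∀ j : ℕ, w^j + (w^j)⁻¹ ∈ adjoin ℚ {α} := cheb_mem _ hw0 hA1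
  -- goal 1
  have hζ4 : Complex.exp (2 * (Real.pi:ℂ) * Complex.I / (p:ℂ)) = ζ^4 := by
    rw [hζdef, ← Complex.exp_nat_mul]
    congr 1
    push_cast
    field_simp
  constructor
  · refine adjoin_simple_le_iff.mpr ?_
    rw [hζ4, hζw, ← pow_mul]
    exact hwk (k*4)
  -- goal 2
  · have hcjK : ∀ j : ℕ, ζ^j + (ζ^j)⁻¹ ∈ adjoin ℚ {ζ + ζ⁻¹} :=
      cheb_mem _ hζ0 (mem_adjoin_simple_self ℚ _)
    have hden : (2 - (w + w⁻¹) : ℂ) ≠ 0 := by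
      intro h
      apply hw1
      have hinv : w * w⁻¹ = 1 := mul_inv_cancel₀ hw0
      have hsq : (w - 1)^2 = 0 := by linear_combination (-w) * h - hinv
      have := pow_eq_zero_iff (n := 2) (by norm_num) |>.mp hsq
      exact sub_eq_zero.mp this
    apply le_antisymm
    · refine adjoin_simple_le_iff.mpr ?_
      set n : ℕ := 5*p - m with hndef
      have hnm : n + m = 5*p := by omega
      have hζ5p : ζ^(5*p) = I := by
        rw [show 5*p = 4*p + p by ring, pow_add, hζprim.pow_eq_one, one_mul, hζp]
      have hζn : ζ^n = I * w⁻¹ := by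
        have hmul : ζ^n * w = I := by rw [← hwm, ← pow_add, hnm, hζ5p]
        exact (eq_mul_inv_iff_mul_eq₀ hw0).mpr hmul
      have hαval : α = (ζ^n + (ζ^n)⁻¹) * (2 - (ζ^m + (ζ^m)⁻¹))⁻¹ := by
        rw [hζn, hwm, mul_inv, Complex.inv_I, inv_inv]
        rw [eq_mul_inv_iff_mul_eq₀ hden]
        rw [hwdef, inv_div]
        field_simp
        ring
      rw [hαval]
      exact mul_mem (hcjK n) (inv_mem (sub_mem (h2A _) (hcjK m)))
    · refine adjoin_simple_le_iff.mpr ?_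
      rw [hζw]
      exact hwk k
end

section
/- Let p be an odd prime. For every integer v and every sign ε ∈ {1, −1}, the integer H_p(ε − δ4·v, v) is not divisible by 3. In particular, there are no integers m ≥ 1 and coprime integers u, v with u + δ4·v = ε and H_p(u,v) = ε·3^m. -/
lemma three_eq : (3 : GaussianInt) = ⟨3, 0⟩ := by decide

lemma dvd3_of (z : GaussianInt) (h1 : (3:ℤ) ∣ z.re) (h2 : (3:ℤ) ∣ z.im) :
    (3 : GaussianInt) ∣ z := by
  obtain ⟨a, ha⟩ := h1
  obtain ⟨b, hb⟩ := h2
  refine ⟨⟨a, b⟩, ?_⟩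
  rw [three_eq]
  ext <;> simp [Zsqrtd.re_mul, Zsqrtd.im_mul, ha, hb]

lemma dvd3_im (z : GaussianInt) (h : (3 : GaussianInt) ∣ z) : (3:ℤ) ∣ z.im := by
  obtain ⟨c, hc⟩ := h
  rw [hc, three_eq]
  exact ⟨c.im, by simp [Zsqrtd.im_mul]⟩

lemma congr_im (p q r : ℕ) (hpr : p = 8 * q + r) (u v a b : ℤ)
    (hu : (3:ℤ) ∣ (u - a)) (hv : (3:ℤ) ∣ (v - b))
    (h8 : (3 : GaussianInt) ∣ ((⟨a, b⟩ : GaussianInt) ^ 8 - 1)) :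
    (3:ℤ) ∣ (Gfun p u v - ((⟨1, 1⟩ : GaussianInt) * (⟨a, b⟩ : GaussianInt) ^ r).im) := by
  set w : GaussianInt := ⟨u, v⟩
  set z : GaussianInt := ⟨a, b⟩
  have hw : (3 : GaussianInt) ∣ (w - z) := by
    apply dvd3_of <;> simp [w, z, Zsqrtd.re_sub, Zsqrtd.im_sub, hu, hv]
  have h1 : (3 : GaussianInt) ∣ (w ^ p - z ^ p) :=
    dvd_trans hw (sub_dvd_pow_sub_pow w z p)
  have h2 : (3 : GaussianInt) ∣ (z ^ p - z ^ r) := by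
    have : z ^ p - z ^ r = ((z ^ 8) ^ q - 1) * z ^ r := by
      rw [hpr, pow_add, pow_mul]; ring
    rw [this]
    exact Dvd.dvd.mul_right (dvd_trans h8 (by
      have := sub_dvd_pow_sub_pow (z ^ 8) 1 q
      simpa using this)) _
  have h3 : (3 : GaussianInt) ∣ ((⟨1, 1⟩ : GaussianInt) * w ^ p
      - (⟨1, 1⟩ : GaussianInt) * z ^ r) := by
    have : (⟨1, 1⟩ : GaussianInt) * w ^ p - (⟨1, 1⟩ : GaussianInt) * z ^ r
        = (⟨1, 1⟩ : GaussianInt) * ((w ^ p - z ^ p) + (z ^ p - z ^ r)) := by ring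
    rw [this]
    exact Dvd.dvd.mul_left (dvd_add h1 h2) _
  have := dvd3_im _ h3
  simpa [Gfun, Zsqrtd.im_sub] using this

lemma case_lemma (p q r : ℕ) (hpr : p = 8 * q + r) (u v a b : ℤ)
    (hu : (3:ℤ) ∣ (u - a)) (hv : (3:ℤ) ∣ (v - b))
    (h8re : (3:ℤ) ∣ ((⟨a, b⟩ : GaussianInt) ^ 8 - 1).re)
    (h8im : (3:ℤ) ∣ ((⟨a, b⟩ : GaussianInt) ^ 8 - 1).im)
    (hni : ¬ (3:ℤ) ∣ ((⟨1, 1⟩ : GaussianInt) * (⟨a, b⟩ : GaussianInt) ^ r).im) :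
    ¬ (3:ℤ) ∣ Gfun p u v := by
  intro h
  have := congr_im p q r hpr u v a b hu hv (dvd3_of _ h8re h8im)
  exact hni (by omega)

lemma core (p : ℕ) (hop : Odd p) (v ε : ℤ) (hε : ε = 1 ∨ ε = -1) :
    ¬ (3:ℤ) ∣ Gfun p (ε - d4 p * v) v := by
  have hodd : p % 2 = 1 := Nat.odd_iff.mp hop
  have hr : p % 8 = 1 ∨ p % 8 = 3 ∨ p % 8 = 5 ∨ p % 8 = 7 := by omega
  have hb : v % 3 = 0 ∨ v % 3 = 1 ∨ v % 3 = 2 := by omega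
  rcases hr with hr | hr | hr | hr
  · have hd : d4 p = 1 := by unfold d4; rw [if_pos (by omega)]
    rcases hε with rfl | rfl <;> rcases hb with hb | hb | hb
    · exact case_lemma p (p/8) 1 (by omega) _ v 1 0
        (by rw [hd]; omega) (by omega) (by decide) (by decide) (by decide)
    · exact case_lemma p (p/8) 1 (by omega) _ v 0 1
        (by rw [hd]; omega) (by omega) (by decide) (by decide) (by decide)
    · exact case_lemma p (p/8) 1 (by omega) _ v 2 2
        (by rw [hd]; omega) (by omega) (by decide) (by decide) (by decide)
    · exact case_lemma p (p/8) 1 (by omega) _ v 2 0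
        (by rw [hd]; omega) (by omega) (by decide) (by decide) (by decide)
    · exact case_lemma p (p/8) 1 (by omega) _ v 1 1
        (by rw [hd]; omega) (by omega) (by decide) (by decide) (by decide)
    · exact case_lemma p (p/8) 1 (by omega) _ v 0 2
        (by rw [hd]; omega) (by omega) (by decide) (by decide) (by decide)
  · have hd : d4 p = -1 := by unfold d4; rw [if_neg (by omega)]
    rcases hε with rfl | rfl <;> rcases hb with hb | hb | hb
    · exact case_lemma p (p/8) 3 (by omega) _ v 1 0
        (by rw [hd]; omega) (by omega) (by decide) (by decide) (by decide)
    · exact case_lemma p (p/8) 3 (by omega) _ v 2 1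
        (by rw [hd]; omega) (by omega) (by decide) (by decide) (by decide)
    · exact case_lemma p (p/8) 3 (by omega) _ v 0 2
        (by rw [hd]; omega) (by omega) (by decide) (by decide) (by decide)
    · exact case_lemma p (p/8) 3 (by omega) _ v 2 0
        (by rw [hd]; omega) (by omega) (by decide) (by decide) (by decide)
    · exact case_lemma p (p/8) 3 (by omega) _ v 0 1
        (by rw [hd]; omega) (by omega) (by decide) (by decide) (by decide)
    · exact case_lemma p (p/8) 3 (by omega) _ v 1 2
        (by rw [hd]; omega) (by omega) (by decide) (by decide) (by decide)
  · have hd : d4 p = 1 := by unfold d4; rw [if_pos (by omega)]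
    rcases hε with rfl | rfl <;> rcases hb with hb | hb | hb
    · exact case_lemma p (p/8) 5 (by omega) _ v 1 0
        (by rw [hd]; omega) (by omega) (by decide) (by decide) (by decide)
    · exact case_lemma p (p/8) 5 (by omega) _ v 0 1
        (by rw [hd]; omega) (by omega) (by decide) (by decide) (by decide)
    · exact case_lemma p (p/8) 5 (by omega) _ v 2 2
        (by rw [hd]; omega) (by omega) (by decide) (by decide) (by decide)
    · exact case_lemma p (p/8) 5 (by omega) _ v 2 0
        (by rw [hd]; omega) (by omega) (by decide) (by decide) (by decide)
    · exact case_lemma p (p/8) 5 (by omega) _ v 1 1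
        (by rw [hd]; omega) (by omega) (by decide) (by decide) (by decide)
    · exact case_lemma p (p/8) 5 (by omega) _ v 0 2
        (by rw [hd]; omega) (by omega) (by decide) (by decide) (by decide)
  · have hd : d4 p = -1 := by unfold d4; rw [if_neg (by omega)]
    rcases hε with rfl | rfl <;> rcases hb with hb | hb | hb
    · exact case_lemma p (p/8) 7 (by omega) _ v 1 0
        (by rw [hd]; omega) (by omega) (by decide) (by decide) (by decide)
    · exact case_lemma p (p/8) 7 (by omega) _ v 2 1
        (by rw [hd]; omega) (by omega) (by decide) (by decide) (by decide)
    · exact case_lemma p (p/8) 7 (by omega) _ v 0 2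
        (by rw [hd]; omega) (by omega) (by decide) (by decide) (by decide)
    · exact case_lemma p (p/8) 7 (by omega) _ v 2 0
        (by rw [hd]; omega) (by omega) (by decide) (by decide) (by decide)
    · exact case_lemma p (p/8) 7 (by omega) _ v 0 1
        (by rw [hd]; omega) (by omega) (by decide) (by decide) (by decide)
    · exact case_lemma p (p/8) 7 (by omega) _ v 1 2
        (by rw [hd]; omega) (by omega) (by decide) (by decide) (by decide)

lemma Hfun_eq (p : ℕ) (v ε : ℤ) (hε : ε = 1 ∨ ε = -1) :
    (3:ℤ) ∣ Hfun p (ε - d4 p * v) v ↔ (3:ℤ) ∣ Gfun p (ε - d4 p * v) v := by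
  have hden : (ε - d4 p * v) + d4 p * v = ε := by ring
  unfold Hfun
  rw [hden]
  rcases hε with rfl | rfl
  · rw [Int.ediv_one]
  · rw [show Gfun p (-1 - d4 p * v) v / (-1) = -(Gfun p (-1 - d4 p * v) v) by
      rw [Int.ediv_neg, Int.ediv_one]]
    exact dvd_neg

theorem Hp_not_div_three (p : ℕ) (hp : Nat.Prime p) (hop : Odd p) :
    (∀ (v ε : ℤ), (ε = 1 ∨ ε = -1) → ¬ (3 ∣ Hfun p (ε - d4 p * v) v)) ∧
    (∀ (m : ℕ), 1 ≤ m → ∀ (u v ε : ℤ), IsCoprime u v → (ε = 1 ∨ ε = -1) →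
      u + d4 p * v = ε → Hfun p u v ≠ ε * 3 ^ m) := by
  have part1 : ∀ (v ε : ℤ), (ε = 1 ∨ ε = -1) → ¬ (3 ∣ Hfun p (ε - d4 p * v) v) := by
    intro v ε hε h
    exact core p hop v ε hε ((Hfun_eq p v ε hε).mp h)
  refine ⟨part1, ?_⟩
  intro m hm u v ε hco hε heq h
  have hu : u = ε - d4 p * v := by linarith
  subst hu
  apply part1 v ε hε
  rw [h]
  exact Dvd.dvd.mul_left (dvd_pow_self 3 (by omega)) ε
end

section
/- Let p be a prime with p > 3 and let m ≥ 1 be an integer. If there exist coprime integers u, v with u + δ4·v = 3^m and H_p(u,v) = 1, then p ≡ 5 (mod 24) or p ≡ 11 (mod 24). -/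
open Finset

namespace PMod24Aux

/-- imaginary part as an additive hom -/
def imHom : GaussianInt →+ ℤ where
  toFun z := z.im
  map_zero' := rfl
  map_add' _ _ := rfl

@[simp] lemma imHom_apply (z : GaussianInt) : imHom z = z.im := rfl

lemma im_mul_intCast (z : GaussianInt) (r : ℤ) : (z * (r : GaussianInt)).im = z.im * r := by
  rw [Zsqrtd.im_mul]
  simp

/-- the coefficient sequence -/
def cc (p : ℕ) (n : ℕ) : ℤ :=
  ((⟨1, 1⟩ : GaussianInt) * (⟨-(d4 p), 1⟩ : GaussianInt) ^ n).im

lemma expand (p : ℕ) (u v : ℤ) :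
    Gfun p u v = ∑ k ∈ range (p + 1),
      (p.choose k : ℤ) * v ^ k * cc p k * (u + d4 p * v) ^ (p - k) := by
  have hx : (⟨u, v⟩ : GaussianInt)
      = ((v : ℤ) : GaussianInt) * ⟨-(d4 p), 1⟩ + ((u + d4 p * v : ℤ) : GaussianInt) := by
    have h1 : (((v : ℤ) : GaussianInt) * ⟨-(d4 p), 1⟩).re = -(d4 p) * v := by
      rw [Zsqrtd.re_mul]; simp; ring
    have h2 : (((v : ℤ) : GaussianInt) * ⟨-(d4 p), 1⟩).im = v := by
      rw [Zsqrtd.im_mul]; simp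
    apply Zsqrtd.ext <;> simp [h1, h2, Zsqrtd.re_add, Zsqrtd.im_add] <;> ring
  rw [Gfun, hx, add_pow, Finset.mul_sum]
  show imHom _ = _
  rw [map_sum]
  refine Finset.sum_congr rfl fun i _ => ?_
  have h3 : (⟨1,1⟩:GaussianInt) * ((((v:ℤ):GaussianInt) * ⟨-(d4 p),1⟩)^i *
      ((u + d4 p * v : ℤ):GaussianInt)^(p-i) * (p.choose i : GaussianInt))
      = ((⟨1,1⟩:GaussianInt) * (⟨-(d4 p),1⟩:GaussianInt)^i) *
        ((v ^ i * (u + d4 p * v) ^ (p - i) * (p.choose i : ℤ) : ℤ) : GaussianInt) := by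
    push_cast
    ring
  rw [imHom_apply, h3, im_mul_intCast, cc]
  ring


lemma I_pow_four : (⟨0,1⟩ : GaussianInt)^4 = 1 := by
  have h2 : (⟨0,1⟩ : GaussianInt)^2 = ⟨-1,0⟩ := by
    rw [pow_two]
    apply Zsqrtd.ext <;> simp
  have : (⟨0,1⟩ : GaussianInt)^4 = (⟨0,1⟩ : GaussianInt)^2 * (⟨0,1⟩ : GaussianInt)^2 := by ring
  rw [this, h2]
  apply Zsqrtd.ext <;> simp

lemma I_pow_mod (n : ℕ) : (⟨0,1⟩ : GaussianInt)^n = (⟨0,1⟩ : GaussianInt)^(n % 4) := by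
  conv_lhs => rw [show n = 4 * (n / 4) + n % 4 from by omega]
  rw [pow_add, pow_mul, I_pow_four, one_pow, one_mul]

lemma intI (c : ℤ) : ((c : ℤ) : GaussianInt) * ⟨0,1⟩ = ⟨0,c⟩ := by
  apply Zsqrtd.ext <;> simp [Zsqrtd.re_mul, Zsqrtd.im_mul]

lemma g_sq (δ : ℤ) (hδ : δ * δ = 1) :
    (⟨-δ,1⟩ : GaussianInt)^2 = ((-2*δ : ℤ) : GaussianInt) * ⟨0,1⟩ := by
  rw [pow_two, intI]
  apply Zsqrtd.ext <;> simp [Zsqrtd.re_mul, Zsqrtd.im_mul] <;> linarith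

lemma g_pow_even (δ : ℤ) (hδ : δ * δ = 1) (n : ℕ) :
    (⟨-δ,1⟩ : GaussianInt)^(2*n)
      = (((-2*δ)^n : ℤ) : GaussianInt) * (⟨0,1⟩ : GaussianInt)^(n % 4) := by
  rw [pow_mul, g_sq δ hδ, mul_pow, ← I_pow_mod]
  push_cast
  ring

lemma cc_eval (p : ℕ) (hodd : p % 2 = 1) :
    cc p (p-1) = d8 p * 2^((p-1)/2) ∧ cc p p = 0 := by
  have hδ : d4 p * d4 p = 1 := by unfold d4; split <;> norm_num
  obtain ⟨r, hpr⟩ : ∃ r, p - 1 = 2 * r := ⟨(p-1)/2, by omega⟩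
  have hr : (p-1)/2 = r := by omega
  rw [hr]
  have hg1 : (⟨-(d4 p),1⟩ : GaussianInt)^(p-1)
      = ((((-2*(d4 p))^r) : ℤ) : GaussianInt) * (⟨0,1⟩ : GaussianInt)^(r % 4) := by
    rw [hpr]; exact g_pow_even _ hδ r
  have hgsplit' : ∀ (g : GaussianInt), g^p = g^(p-1) * g := by
    intro g
    conv_lhs => rw [show p = (p-1)+1 from by omega]
    exact pow_succ g (p-1)
  have hgsplit := hgsplit' (⟨-(d4 p),1⟩ : GaussianInt)
  have hcc1 : cc p (p-1) = ((⟨1,1⟩ : GaussianInt) * (⟨0,1⟩ : GaussianInt)^(r % 4)).im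
      * (-2*(d4 p))^r := by
    rw [cc, hg1, show (⟨1,1⟩ : GaussianInt) * (((((-2*(d4 p))^r) : ℤ) : GaussianInt)
      * (⟨0,1⟩: GaussianInt)^(r % 4))
      = ((⟨1,1⟩ : GaussianInt) * (⟨0,1⟩ : GaussianInt)^(r % 4))
        * ((((-2*(d4 p))^r) : ℤ) : GaussianInt) from by ring, im_mul_intCast]
  have hcc2 : cc p p = ((⟨1,1⟩ : GaussianInt) * ((⟨0,1⟩ : GaussianInt)^(r % 4)
      * ⟨-(d4 p),1⟩)).im * (-2*(d4 p))^r := by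
    rw [cc, hgsplit, hg1, show (⟨1,1⟩ : GaussianInt) * (((((((-2*(d4 p))^r) : ℤ) : GaussianInt)
      * (⟨0,1⟩: GaussianInt)^(r % 4))) * ⟨-(d4 p),1⟩)
      = ((⟨1,1⟩ : GaussianInt) * ((⟨0,1⟩ : GaussianInt)^(r % 4) * ⟨-(d4 p),1⟩))
        * ((((-2*(d4 p))^r) : ℤ) : GaussianInt) from by ring, im_mul_intCast]
  have h8 : p % 8 = 1 ∨ p % 8 = 3 ∨ p % 8 = 5 ∨ p % 8 = 7 := by omega
  rcases h8 with h8 | h8 | h8 | h8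
  · have hd4 : d4 p = 1 := by simp [d4, show p % 4 = 1 from by omega]
    have hd8 : d8 p = 1 := by simp [d8, h8]
    have hr4 : r % 4 = 0 := by omega
    have hev : Even r := by refine Nat.even_iff.mpr ?_; omega
    rw [hcc1, hcc2, hd4, hd8, hr4]
    constructor
    · simp [show ((-2 : ℤ)*1) = -2 from by norm_num, hev.neg_pow]
    · simp [Zsqrtd.im_mul]
  · have hd4 : d4 p = -1 := by simp [d4, show p % 4 = 3 from by omega]
    have hd8 : d8 p = 1 := by simp [d8, h8]
    have hr4 : r % 4 = 1 := by omega
    rw [hcc1, hcc2, hd4, hd8, hr4]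
    norm_num [Zsqrtd.im_mul, Zsqrtd.re_mul]
  · have hd4 : d4 p = 1 := by simp [d4, show p % 4 = 1 from by omega]
    have hd8 : d8 p = -1 := by simp [d8, show ¬(p % 8 = 1 ∨ p % 8 = 3) from by omega]
    have hr4 : r % 4 = 2 := by omega
    have hev : Even r := by refine Nat.even_iff.mpr ?_; omega
    rw [hcc1, hcc2, hd4, hd8, hr4]
    constructor
    · norm_num [Zsqrtd.im_mul, Zsqrtd.re_mul, pow_succ, hev.neg_pow]
    · norm_num [Zsqrtd.im_mul, Zsqrtd.re_mul, pow_succ]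
  · have hd4 : d4 p = -1 := by simp [d4, show p % 4 = 3 from by omega]
    have hd8 : d8 p = -1 := by simp [d8, show ¬(p % 8 = 1 ∨ p % 8 = 3) from by omega]
    have hr4 : r % 4 = 3 := by omega
    rw [hcc1, hcc2, hd4, hd8, hr4]
    norm_num [Zsqrtd.im_mul, Zsqrtd.re_mul, pow_succ]


lemma three_pow_ge (t : ℕ) (ht : 1 ≤ t) : t + 2 ≤ 3^t := by
  induction t with
  | zero => omega
  | succ n ih =>
    rcases Nat.eq_zero_or_pos n with h | h
    · subst h; norm_num
    · have h1 := ih (by omega)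
      have h2 : (3:ℕ)^(n+1) = 3 * 3^n := by rw [pow_succ]; ring
      omega

lemma vJ_le (j : ℕ) (hj : 2 ≤ j) : (j*(j-1)).factorization 3 ≤ j - 2 := by
  have hJ0 : j*(j-1) ≠ 0 := Nat.mul_ne_zero (by omega) (by omega)
  set w := (j*(j-1)).factorization 3 with hw
  have hdvd : 3^w ∣ j*(j-1) := Nat.ordProj_dvd _ 3
  have hble : 3^w ≤ j := by
    by_cases h3j : (3:ℕ) ∣ j
    · have hco : Nat.Coprime (3^w) (j-1) := by
        apply Nat.Coprime.pow_left
        exact (Nat.prime_three.coprime_iff_not_dvd).mpr (by omega)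
      exact Nat.le_of_dvd (by omega) (hco.dvd_of_dvd_mul_right hdvd)
    · have hco : Nat.Coprime (3^w) j :=
        Nat.Coprime.pow_left _ ((Nat.prime_three.coprime_iff_not_dvd).mpr h3j)
      have h2 : 3^w ∣ (j-1) := hco.dvd_of_dvd_mul_left hdvd
      exact le_trans (Nat.le_of_dvd (by omega) h2) (by omega)
  rcases Nat.eq_zero_or_pos w with h | h
  · omega
  · have := three_pow_ge w h
    omega

lemma choose_id (n k : ℕ) (h1 : 1 ≤ n) : n.choose k * (n - k) = n * (n-1).choose k := by
  have h := Nat.choose_succ_right_eq n k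
  have h2 := Nat.add_one_mul_choose_eq (n-1) k
  rw [show n - 1 + 1 = n from by omega] at h2
  linarith

lemma termdvd (p kk k : ℕ) (hp : 2 ≤ p) (hk : k < p - 1) (hdvd : 3^kk ∣ (p-1)) :
    (3:ℕ)^(kk+1) ∣ p.choose k * 3^(p-1-k) := by
  have hj2 : 2 ≤ p - k := by omega
  have hid : p.choose k * ((p-k) * (p-k-1)) = p * (p-1) * (p-2).choose k := by
    have e1 : p.choose k * (p-k) = p * (p-1).choose k := choose_id p k (by omega)
    have e2 : (p-1).choose k * (p-1-k) = (p-1) * (p-2).choose k := by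
      have h := choose_id (p-1) k (by omega)
      rw [show p-1-1 = p-2 from by omega] at h
      exact h
    calc p.choose k * ((p-k)*(p-k-1)) = (p.choose k * (p-k)) * (p-k-1) := by ring
    _ = p * (p-1).choose k * (p-k-1) := by rw [e1]
    _ = p * ((p-1).choose k * (p-1-k)) := by rw [show p-k-1 = p-1-k from by omega]; ring
    _ = p * ((p-1) * (p-2).choose k) := by rw [e2]
    _ = p * (p-1) * (p-2).choose k := by ring
  have hdvd2 : 3^kk ∣ p.choose k * ((p-k) * (p-k-1)) := by
    rw [hid]
    exact Dvd.dvd.mul_right (Dvd.dvd.mul_left hdvd p) _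
  set w := ((p-k)*(p-k-1)).factorization 3 with hw
  have hwle : w ≤ (p-k) - 2 := vJ_le _ hj2
  by_cases hcase : kk ≤ w
  · exact Dvd.dvd.mul_left (pow_dvd_pow 3 (by omega)) _
  · have hJ0 : (p-k)*(p-k-1) ≠ 0 := Nat.mul_ne_zero (by omega) (by omega)
    have hsplit := Nat.ordProj_mul_ordCompl_eq_self ((p-k)*(p-k-1)) 3
    have hco : Nat.Coprime 3 (((p-k)*(p-k-1)) / 3^w) := Nat.coprime_ordCompl Nat.prime_three hJ0
    have hdvd3 : 3^(kk - w) ∣ p.choose k * (((p-k)*(p-k-1)) / 3^w) := by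
      have h1 : 3^(kk-w) * 3^w ∣ (p.choose k * (((p-k)*(p-k-1)) / 3^w)) * 3^w := by
        rw [show (3:ℕ)^(kk-w) * 3^w = 3^kk from by rw [← pow_add]; congr 1; omega]
        rw [show (p.choose k * (((p-k)*(p-k-1)) / 3^w)) * 3^w
            = p.choose k * ((p-k)*(p-k-1)) from by
          rw [mul_assoc, mul_comm (((p-k)*(p-k-1)) / 3^w), hsplit]]
        exact hdvd2
      exact (Nat.mul_dvd_mul_iff_right (pow_pos (by norm_num : 0 < 3) w)).mp h1
    have hdvd4 : 3^(kk-w) ∣ p.choose k :=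
      (Nat.Coprime.pow_left _ hco).dvd_of_dvd_mul_right hdvd3
    have h2 : (3:ℕ)^(kk+1) ∣ 3^(kk-w) * 3^(p-1-k) := by
      rw [← pow_add]; apply pow_dvd_pow; omega
    exact h2.trans (mul_dvd_mul hdvd4 dvd_rfl)

lemma two_pow_three_pow (kk : ℕ) : (3:ℤ)^(kk+1) ∣ 2^(3^kk) + 1 := by
  induction kk with
  | zero => norm_num
  | succ n ih =>
    obtain ⟨t, ht⟩ := ih
    have hA : (2:ℤ)^(3^n) = 3*(3^n*t) - 1 := by
      have : (3:ℤ)^(n+1) = 3 * 3^n := by ring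
      linarith [ht, this.symm ▸ ht]
    have h3 : (3:ℤ) ∣ (2^(3^n))^2 - 2^(3^n) + 1 := by
      refine ⟨3*(3^n*t)^2 - 3*(3^n*t) + 1, ?_⟩
      rw [hA]; ring
    have hfact : (2:ℤ)^(3^(n+1)) + 1 = (2^(3^n) + 1) * ((2^(3^n))^2 - 2^(3^n) + 1) := by
      rw [show (3:ℕ)^(n+1) = 3^n * 3 from by rw [pow_succ], pow_mul]
      ring
    rw [hfact, show ((3:ℤ)^(n+1+1)) = 3^(n+1) * 3 from by ring]
    exact mul_dvd_mul (⟨t, ht⟩ : (3:ℤ)^(n+1) ∣ 2^(3^n) + 1) h3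


lemma two_pow_r (kk p : ℕ) (hodd : p % 2 = 1) (hk : (3:ℕ)^kk ∣ (p-1)) :
    (2 : ZMod (3^(kk+1)))^((p-1)/2) = ((d4 p : ℤ) : ZMod (3^(kk+1))) := by
  have hminus : (2 : ZMod (3^(kk+1)))^(3^kk) = -1 := by
    have hd := two_pow_three_pow kk
    have h0 : ((2^(3^kk) + 1 : ℤ) : ZMod (3^(kk+1))) = 0 := by
      rw [ZMod.intCast_zmod_eq_zero_iff_dvd]
      exact_mod_cast hd
    push_cast at h0
    linear_combination h0
  obtain ⟨h, hh⟩ : ∃ h, (p-1)/2 = 3^kk * h := by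
    have h2 : (3:ℕ)^kk ∣ (p-1)/2 := by
      have h3 : (3:ℕ)^kk ∣ 2 * ((p-1)/2) := by
        rw [show 2*((p-1)/2) = p-1 from by omega]; exact hk
      exact (Nat.Coprime.pow_left _ (by norm_num)).dvd_of_dvd_mul_left h3
    exact h2
  have hmod : (3:ℕ)^kk % 2 = 1 := Nat.odd_iff.mp (Odd.pow ⟨1, by norm_num⟩)
  have hparh : ((p-1)/2) % 2 = h % 2 := by
    rw [hh, Nat.mul_mod, hmod, one_mul, Nat.mod_mod_of_dvd _ dvd_rfl]
  rw [hh, pow_mul, hminus]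
  rcases Nat.even_or_odd h with hev | hod
  · rw [Even.neg_one_pow hev]
    have h4 : p % 4 = 1 := by
      have h5 := Nat.even_iff.mp hev
      omega
    simp [d4, h4]
  · rw [Odd.neg_one_pow hod]
    have h4 : p % 4 ≠ 1 := by
      have h5 := Nat.odd_iff.mp hod
      omega
    simp [d4, h4]

lemma v_pow (kk p : ℕ) (v : ℤ) (hodd : p % 2 = 1) (hv3 : ¬ (3:ℤ) ∣ v)
    (hk : (3:ℕ)^kk ∣ (p-1)) : ((v : ZMod (3^(kk+1))))^(p-1) = 1 := by
  have hvn : (v.natAbs).Coprime (3^(kk+1)) := by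
    have h3 : ¬ (3:ℕ) ∣ v.natAbs := by
      intro h
      exact hv3 (Int.natAbs_dvd_natAbs.mp (by simpa using h))
    exact Nat.Coprime.pow_right _
      (Nat.coprime_comm.mp ((Nat.prime_three.coprime_iff_not_dvd).mpr h3))
  have htot : ((v.natAbs : ZMod (3^(kk+1))))^((3^(kk+1)).totient) = 1 := by
    have h := ZMod.pow_totient (ZMod.unitOfCoprime v.natAbs hvn)
    rw [← ZMod.coe_unitOfCoprime v.natAbs hvn, ← Units.val_pow_eq_pow_val, h, Units.val_one]
  have htotval : (3^(kk+1)).totient = 3^kk * 2 := by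
    rw [Nat.totient_prime_pow Nat.prime_three (Nat.succ_pos kk)]
    simp
  obtain ⟨t, ht⟩ : ∃ t, p - 1 = (3^kk * 2) * t := by
    have h2 : 2 ∣ p - 1 := by omega
    exact (Nat.Coprime.pow_left kk (by norm_num : Nat.Coprime 3 2)).mul_dvd_of_dvd_of_dvd hk h2
  have habs : ((v : ZMod (3^(kk+1))))^(p-1) = ((v.natAbs : ZMod (3^(kk+1))))^(p-1) := by
    rcases Int.natAbs_eq v with h | h
    · rw [h]; norm_cast
    · conv_lhs => rw [h]
      rw [Int.cast_neg, Int.cast_natCast,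
        show p - 1 = 2*((p-1)/2) from by omega, pow_mul, pow_mul, neg_sq]
  rw [habs, ht, pow_mul, ← htotval, htot, one_pow]


lemma key (q : ℕ) (v d : ℤ) (hq4 : 4 ≤ q) (hodd : (q+1) % 2 = 1)
    (hv3 : ¬ (3:ℤ) ∣ v) (hd3 : (3:ℤ) ∣ d)
    (hS : ∑ k ∈ range (q+1), ((q+1).choose k : ℤ) * v ^ k * cc (q+1) k * d ^ (q - k) = 1)
    (kk : ℕ) (hk : (3:ℕ)^kk ∣ q) :
    (3:ℤ)^(kk+1) ∣ ((q+1 : ℤ) * (d4 (q+1) * d8 (q+1)) - 1) := by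
  have hk' : (3:ℕ)^kk ∣ (q+1) - 1 := by simpa using hk
  rw [Finset.sum_range_succ] at hS
  have hZ := congrArg (fun z : ℤ => (z : ZMod (3^(kk+1)))) hS
  simp only [Int.cast_add, Int.cast_one, Int.cast_sum] at hZ
  have hzero : (∑ k ∈ range q,
      ((((q+1).choose k : ℤ) * v ^ k * cc (q+1) k * d ^ (q - k) : ℤ) : ZMod (3^(kk+1)))) = 0 := by
    apply Finset.sum_eq_zero
    intro k hkk
    have hklt : k < q := by simpa using hkk
    rw [ZMod.intCast_zmod_eq_zero_iff_dvd]
    have hnat := termdvd (q+1) kk k (by omega) (by omega) hk'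
    obtain ⟨e, he⟩ := hd3
    have h1 : ((3:ℤ))^(kk+1) ∣ ((q+1).choose k : ℤ) * 3^(q-k) := by exact_mod_cast hnat
    have h2 : (((q+1).choose k : ℤ) * v ^ k * cc (q+1) k * d ^ (q - k))
        = (((q+1).choose k : ℤ) * 3^(q-k)) * (v^k * cc (q+1) k * e^(q-k)) := by
      rw [he, mul_pow]; ring
    rw [h2]
    have h3 : ((3:ℤ)^(kk+1)) ∣ (((q+1).choose k : ℤ) * 3^(q-k)) * (v^k * cc (q+1) k * e^(q-k)) :=
      Dvd.dvd.mul_right h1 _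
    exact_mod_cast h3
  rw [hzero, zero_add] at hZ
  -- hZ : cast of last term = 1
  have hccs := cc_eval (q+1) hodd
  have hcc : cc (q+1) q = d8 (q+1) * 2^(q/2) := by
    have := hccs.1
    simpa using this
  have hch : ((q+1).choose q : ℤ) = (q+1 : ℤ) := by
    rw [Nat.choose_succ_self_right]; push_cast; ring
  rw [hch, hcc] at hZ
  have hvp : ((v : ZMod (3^(kk+1))))^q = 1 := by
    have := v_pow kk (q+1) v hodd hv3 hk'
    simpa using this
  have h2p : (2 : ZMod (3^(kk+1)))^(q/2) = ((d4 (q+1) : ℤ) : ZMod (3^(kk+1))) := by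
    have := two_pow_r kk (q+1) hodd hk'
    simpa using this
  simp only [Nat.sub_self, pow_zero, mul_one] at hZ
  have hfinal : (((q+1 : ℤ) * (d4 (q+1) * d8 (q+1)) - 1 : ℤ) : ZMod (3^(kk+1))) = 0 := by
    push_cast at hZ ⊢
    rw [hvp, h2p] at hZ
    push_cast at hZ
    linear_combination hZ
  rw [ZMod.intCast_zmod_eq_zero_iff_dvd] at hfinal
  exact_mod_cast hfinal

end PMod24Aux

theorem p_mod_24 (p : ℕ) (hp : Nat.Prime p) (hp3 : 3 < p) (m : ℕ) (hm : 1 ≤ m)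
    (u v : ℤ) (hcop : IsCoprime u v)
    (h1 : u + d4 p * v = 3 ^ m) (h2 : Hfun p u v = 1) :
    p % 24 = 5 ∨ p % 24 = 11 := by
  obtain ⟨q, rfl⟩ : ∃ q, p = q + 1 := ⟨p-1, (Nat.succ_pred_eq_of_pos (by omega)).symm⟩
  have hq4 : 4 ≤ q := by
    have h4 : q + 1 ≠ 4 := by
      intro h
      rw [h] at hp
      norm_num at hp
    omega
  have hodd : (q+1) % 2 = 1 := by
    have := Nat.Prime.odd_of_ne_two hp (by omega)
    exact Nat.odd_iff.mp this
  have hd3 : (3:ℤ) ∣ (u + d4 (q+1) * v) := by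
    rw [h1]
    exact dvd_pow_self (3:ℤ) (by omega : m ≠ 0)
  have hd0 : (u + d4 (q+1) * v) ≠ 0 := by
    rw [h1]; positivity
  have hv3 : ¬ (3:ℤ) ∣ v := by
    intro h3v
    have h3u : (3:ℤ) ∣ u := by
      have he : u = (u + d4 (q+1)*v) - d4 (q+1) * v := by ring
      rw [he]
      exact dvd_sub hd3 (Dvd.dvd.mul_left h3v _)
    obtain ⟨a, b, hab⟩ := hcop
    have : (3:ℤ) ∣ 1 := by
      rw [← hab]
      exact dvd_add (Dvd.dvd.mul_left h3u a) (Dvd.dvd.mul_left h3v b)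
    norm_num at this
  -- expansion
  have hexp := PMod24Aux.expand (q+1) u v
  rw [Finset.sum_range_succ] at hexp
  have hccs := PMod24Aux.cc_eval (q+1) hodd
  have hlast : (((q+1).choose (q+1) : ℤ)) * v^(q+1) * PMod24Aux.cc (q+1) (q+1)
      * (u + d4 (q+1)*v)^((q+1)-(q+1)) = 0 := by
    rw [hccs.2]; ring
  rw [hlast, add_zero] at hexp
  have hfact : ∀ k ∈ range (q+1), (((q+1).choose k : ℤ) * v ^ k * PMod24Aux.cc (q+1) k
      * (u + d4 (q+1) * v) ^ ((q+1) - k))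
      = (u + d4 (q+1) * v) * (((q+1).choose k : ℤ) * v ^ k * PMod24Aux.cc (q+1) k
        * (u + d4 (q+1) * v) ^ (q - k)) := by
    intro k hk
    have hkle : k ≤ q := by simpa [Nat.lt_succ_iff] using hk
    rw [show (q+1) - k = (q - k) + 1 from by omega, pow_succ]
    ring
  rw [Finset.sum_congr rfl hfact, ← Finset.mul_sum] at hexp
  have hS : (∑ k ∈ range (q+1), ((q+1).choose k : ℤ) * v ^ k * PMod24Aux.cc (q+1) k
      * (u + d4 (q+1) * v) ^ (q - k)) = 1 := by
    have hH := h2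
    rw [Hfun, hexp, Int.mul_ediv_cancel_left _ hd0] at hH
    exact hH
  have h8 : (q+1)%8 = 1 ∨ (q+1)%8 = 3 ∨ (q+1)%8 = 5 ∨ (q+1)%8 = 7 := by omega
  have hE : (d4 (q+1) * d8 (q+1) = 1 ∧ ((q+1)%8 = 1 ∨ (q+1)%8 = 7))
      ∨ (d4 (q+1) * d8 (q+1) = -1 ∧ ((q+1)%8 = 3 ∨ (q+1)%8 = 5)) := by
    rcases h8 with h8 | h8 | h8 | h8
    · exact Or.inl ⟨by simp [d4, d8, h8, show (q+1) % 4 = 1 from by omega], Or.inl h8⟩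
    · exact Or.inr ⟨by simp [d4, d8, h8, show (q+1) % 4 = 3 from by omega], Or.inl h8⟩
    · exact Or.inr ⟨by simp [d4, d8, show ¬((q+1)%8 = 1 ∨ (q+1)%8 = 3) from by omega,
        show (q+1) % 4 = 1 from by omega], Or.inr h8⟩
    · exact Or.inl ⟨by simp [d4, d8, show ¬((q+1)%8 = 1 ∨ (q+1)%8 = 3) from by omega,
        show (q+1) % 4 = 3 from by omega], Or.inr h8⟩
  rcases hE with ⟨hE1, hE8⟩ | ⟨hE1, hE8⟩
  · exfalso
    have hall : ∀ kk, (3:ℕ)^kk ∣ q := by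
      intro kk
      induction kk with
      | zero => simp
      | succ t iht =>
        have hdd := PMod24Aux.key q v _ hq4 hodd hv3 hd3 hS t iht
        rw [hE1, mul_one] at hdd
        have h3 : ((3:ℕ)^(t+1) : ℤ) ∣ ((q : ℕ) : ℤ) := by
          push_cast at hdd ⊢
          convert hdd using 1
          push_cast
          ring
        exact_mod_cast h3
    have hdq := hall q
    have hlt := Nat.lt_pow_self (n := q) (by norm_num : 1 < 3)
    have := Nat.le_of_dvd (by omega) hdq
    omega
  · have hmod3 : (q+1) % 3 = 2 := by
      have hdd := PMod24Aux.key q v _ hq4 hodd hv3 hd3 hS 0 (one_dvd q)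
      rw [hE1] at hdd
      have h3 : (3:ℤ) ∣ ((q:ℤ)+2) := by
        have he : ((q:ℤ) + 1) * (-1) - 1 = -((q:ℤ)+2) := by ring
        rw [he] at hdd
        rw [pow_one] at hdd
        exact (dvd_neg).mp hdd
      have h4 : (3:ℕ) ∣ (q+2) := by exact_mod_cast h3
      omega
    omega
end

section
/- The coprime positive integer solutions (x, y, m) with m ≥ 1 of the equation x² + 3^(2m) = 2·y³ are exactly (x, y, m) = (13, 5, 2) and (x, y, m) = (545, 53, 3). -/

-- === Pell part ===
def pp : ℕ → ℕ × ℕ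
  | 0 => (1, 1)
  | k+1 => (2 * (pp k).1 + 3 * (pp k).2, (pp k).1 + 2 * (pp k).2)

lemma pp_mod : ∀ k, (pp (k+18)).1 % 153 = (pp k).1 % 153 ∧
    (pp (k+18)).2 % 153 = (pp k).2 % 153
  | 0 => by decide
  | k+1 => by
    have h := pp_mod k
    show (2 * (pp (k+18)).1 + 3 * (pp (k+18)).2) % 153
        = (2 * (pp k).1 + 3 * (pp k).2) % 153 ∧
      ((pp (k+18)).1 + 2 * (pp (k+18)).2) % 153
        = ((pp k).1 + 2 * (pp k).2) % 153
    omega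

lemma pp_nine : ∀ k, 9 ∣ (pp k).2 → 17 ∣ (pp k).2 := by
  intro k
  induction k using Nat.strong_induction_on with
  | _ k ih =>
    rcases Nat.lt_or_ge k 18 with hk | hk
    · interval_cases k <;> decide
    · obtain ⟨j, rfl⟩ : ∃ j, k = j + 18 := ⟨k - 18, by omega⟩
      have h := pp_mod j
      have hj := ih j (by omega)
      omega

lemma pp_pos : ∀ k, 1 ≤ (pp k).1 ∧ 1 ≤ (pp k).2
  | 0 => by decide
  | k+1 => by have := pp_pos k; simp [pp]; omega

lemma pp_ge (k : ℕ) : 11 ≤ (pp (k+2)).2 := by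
  have h := pp_pos k
  show (2 * (pp k).1 + 3 * (pp k).2) + 2 * ((pp k).1 + 2 * (pp k).2) ≥ 11
  omega

lemma w_pow3 (k j : ℕ) (h : (pp k).2 = 3 ^ j) : k = 0 ∨ k = 1 := by
  by_contra hc
  push_neg at hc
  obtain ⟨k', rfl⟩ : ∃ k', k = k' + 2 := ⟨k - 2, by omega⟩
  have h11 : 11 ≤ 3 ^ j := h ▸ pp_ge k'
  have hj : 2 ≤ j := by
    by_contra hj
    interval_cases j <;> omega
  have h9 : 9 ∣ (pp (k'+2)).2 := by
    rw [h]
    exact (show (9:ℕ) = 3^2 by norm_num) ▸ pow_dvd_pow 3 hj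
  have h17 := pp_nine _ h9
  rw [h] at h17
  have := Nat.Prime.dvd_of_dvd_pow (p := 17) (by norm_num) h17
  omega

lemma pell_classify : ∀ y x : ℕ, x^2 + 2 = 3*y^2 → ∃ k, x = (pp k).1 ∧ y = (pp k).2 := by
  intro y
  induction y using Nat.strong_induction_on with
  | _ y ih =>
    intro x h
    rcases Nat.lt_or_ge y 2 with hy | hy
    · interval_cases y
      · omega
      · have hx : x < 2 := by nlinarith
        interval_cases x
        · omega
        · exact ⟨0, rfl, rfl⟩
    · have h2x : 3*y < 2*x := by nlinarith
      have hx2 : x < 2*y := by nlinarith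
      have hxy : y < x := by nlinarith
      set x' := 2*x - 3*y with hx'
      set y' := 2*y - x with hy'
      have h' : x'^2 + 2 = 3*y'^2 := by
        have hh : (x':ℤ)^2 + 2 = 3*(y':ℤ)^2 := by
          have hx'' : (x':ℤ) = 2*(x:ℤ) - 3*(y:ℤ) := by push_cast [hx']; omega
          have hy'' : (y':ℤ) = 2*(y:ℤ) - (x:ℤ) := by push_cast [hy']; omega
          have hc : (x:ℤ)^2 + 2 = 3*(y:ℤ)^2 := by exact_mod_cast h
          rw [hx'', hy'']; linear_combination hc
        exact_mod_cast hh
      obtain ⟨k, hk1, hk2⟩ := ih y' (by omega) x' h'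
      refine ⟨k+1, ?_, ?_⟩
      · show x = 2 * (pp k).1 + 3 * (pp k).2
        omega
      · show y = (pp k).1 + 2 * (pp k).2
        omega

-- === Gaussian part ===
lemma unit_pow4 (z : GaussianInt) (h : IsUnit z) : z^4 = 1 := by
  have hnu : z.norm.natAbs = 1 := Zsqrtd.norm_eq_one_iff.mpr h
  have hnn : 0 ≤ z.norm := Zsqrtd.norm_nonneg (by norm_num) _
  have hnorm1 : z.norm = 1 := by omega
  rw [Zsqrtd.norm_def] at hnorm1
  have h1 : z.re * z.re + z.im * z.im = 1 := by linear_combination hnorm1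
  have hri : z.re = 0 ∨ z.im = 0 := by
    by_contra hcon
    push_neg at hcon
    have hr1 : 1 ≤ z.re * z.re := by
      rcases lt_or_gt_of_ne hcon.1 with hh | hh <;> nlinarith
    have hi1 : 1 ≤ z.im * z.im := by
      rcases lt_or_gt_of_ne hcon.2 with hh | hh <;> nlinarith
    linarith
  have hzz : z*z = 1 ∨ z*z = -1 := by
    rcases hri with h0 | h0
    · right
      ext
      · rw [Zsqrtd.re_mul, Zsqrtd.re_neg, Zsqrtd.re_one]
        linear_combination -h1 + 2*z.re*h0
      · rw [Zsqrtd.im_mul, Zsqrtd.im_neg, Zsqrtd.im_one]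
        linear_combination 2*z.im*h0
    · left
      ext
      · rw [Zsqrtd.re_mul, Zsqrtd.re_one]
        linear_combination h1 - 2*z.im*h0
      · rw [Zsqrtd.im_mul, Zsqrtd.im_one]
        linear_combination 2*z.re*h0
  have h4 : z^4 = (z*z)^2 := by ring
  rcases hzz with h0 | h0 <;> rw [h4, h0] <;> ring

lemma gauss_cube (X N Y : ℤ) (hXodd : X % 2 = 1) (hNodd : N % 2 = 1)
    (hYodd : Y % 2 = 1) (hgcd : Int.gcd X Y = 1)
    (heq : X^2 + N^2 = 2*Y^3) :
    ∃ a b : ℤ, X = (a+b)*(a^2-4*a*b+b^2) ∧ N = (a-b)*(a^2+4*a*b+b^2)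
      ∧ Y = a^2+b^2 := by
  letI : GCDMonoid GaussianInt := EuclideanDomain.gcdMonoid _
  obtain ⟨u, hu⟩ : ∃ u : ℤ, X + N = 2*u := ⟨(X+N)/2, by omega⟩
  set v : ℤ := u - X with hv
  set w : GaussianInt := ⟨u, v⟩ with hw
  have hwre : w.re = u := rfl
  have hwim : w.im = v := rfl
  have huv : u^2 + v^2 = Y^3 := by
    have h2 : 2*(u^2 + v^2) = 2*Y^3 := by
      have hN' : N = 2*u - X := by omega
      rw [hv]
      rw [hN'] at heq
      linear_combination heq
    linarith
  set YG : GaussianInt := ⟨Y, 0⟩ with hYG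
  have hYG3 : YG^3 = ⟨Y^3, 0⟩ := by
    rw [show YG^3 = YG*YG*YG by ring]
    ext <;>
      simp only [Zsqrtd.re_mul, Zsqrtd.im_mul, hYG] <;> ring
  have hprod : w * star w = YG^3 := by
    rw [hYG3]
    ext
    · simp only [Zsqrtd.re_mul, Zsqrtd.re_star, Zsqrtd.im_star, hwre, hwim]
      linear_combination huv
    · simp only [Zsqrtd.im_mul, Zsqrtd.re_star, Zsqrtd.im_star, hwre, hwim]
      ring
  have hnormdvd : ∀ (α β : GaussianInt), α ∣ β → α.norm ∣ β.norm := by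
    rintro α β ⟨t, rfl⟩
    rw [Zsqrtd.norm_mul]
    exact dvd_mul_right _ _
  have hgw : gcd w (star w) ∣ w := gcd_dvd_left _ _
  have hgsw : gcd w (star w) ∣ star w := gcd_dvd_right _ _
  have h2X : gcd w (star w) ∣ (⟨2*X, 0⟩ : GaussianInt) := by
    have hkey : (⟨2*X, 0⟩ : GaussianInt) = (⟨1,1⟩ : GaussianInt) * w
        + (⟨1,-1⟩ : GaussianInt) * star w := by
      ext
      · simp only [Zsqrtd.re_add, Zsqrtd.re_mul, Zsqrtd.re_star, Zsqrtd.im_star, hwre, hwim]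
        ring
      · simp only [Zsqrtd.im_add, Zsqrtd.im_mul, Zsqrtd.re_star, Zsqrtd.im_star, hwre, hwim]
        ring
    rw [hkey]
    exact dvd_add (hgw.mul_left _) (hgsw.mul_left _)
  have hnw : w.norm = Y^3 := by
    rw [Zsqrtd.norm_def, hwre, hwim]
    linear_combination huv
  set g : GaussianInt := gcd w (star w) with hg
  have hd1 : g.norm ∣ 4*X^2 := by
    have hh := hnormdvd _ _ h2X
    have hn2X : (⟨2*X, 0⟩ : GaussianInt).norm = 4*X^2 := by
      rw [Zsqrtd.norm_def]; ring
    rwa [hn2X] at hh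
  have hd2 : g.norm ∣ Y^3 := by
    have hh := hnormdvd _ _ hgw
    rwa [hnw] at hh
  have hdnat1 : g.norm.natAbs ∣ 4*X.natAbs^2 := by
    have := Int.natAbs_dvd_natAbs.mpr hd1
    simpa [Int.natAbs_mul, Int.natAbs_pow] using this
  have hdnat2 : g.norm.natAbs ∣ Y.natAbs^3 := by
    have := Int.natAbs_dvd_natAbs.mpr hd2
    simpa [Int.natAbs_pow] using this
  have hcop : Nat.Coprime (4*X.natAbs^2) (Y.natAbs^3) := by
    have c2 : Nat.Coprime 2 Y.natAbs := (Nat.prime_two.coprime_iff_not_dvd).mpr (by omega)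
    have c4 : Nat.Coprime (2^2) (Y.natAbs^3) := Nat.Coprime.pow _ _ c2
    have cx : Nat.Coprime (X.natAbs^2) (Y.natAbs^3) := Nat.Coprime.pow _ _ hgcd
    have := Nat.Coprime.mul c4 cx
    simpa using this
  have hd1' : g.norm.natAbs = 1 := by
    have hdg := Nat.dvd_gcd hdnat1 hdnat2
    rw [hcop.gcd_eq_one] at hdg
    exact Nat.eq_one_of_dvd_one hdg
  have hunit : IsUnit g := Zsqrtd.norm_eq_one_iff.mp hd1'
  obtain ⟨c0, hassoc⟩ := exists_associated_pow_of_mul_eq_pow hunit hprod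
  obtain ⟨uu, huu⟩ := hassoc
  have h4 : ((uu : GaussianInt))^4 = 1 := unit_pow4 _ uu.isUnit
  set c : GaussianInt := c0 * ((uu:GaussianInt))^3 with hcdef
  have hc : c^3 = w := by
    have h9 : ((uu:GaussianInt))^9 = (uu:GaussianInt) := by
      calc ((uu:GaussianInt))^9 = (((uu:GaussianInt))^4)^2 * (uu:GaussianInt) := by ring
      _ = (uu:GaussianInt) := by rw [h4]; ring
    calc c^3 = c0^3 * ((uu:GaussianInt))^9 := by rw [hcdef]; ring
    _ = c0^3 * (uu:GaussianInt) := by rw [h9]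
    _ = w := huu
  set a : ℤ := c.re with ha
  set b : ℤ := c.im with hb
  have hure : u = a^3 - 3*a*b^2 := by
    have hh := congrArg Zsqrtd.re hc
    rw [hwre] at hh
    rw [← hh, show c^3 = c*c*c by ring]
    simp only [Zsqrtd.re_mul, Zsqrtd.im_mul, ← ha, ← hb]
    ring
  have hvim : v = 3*a^2*b - b^3 := by
    have hh := congrArg Zsqrtd.im hc
    rw [hwim] at hh
    rw [← hh, show c^3 = c*c*c by ring]
    simp only [Zsqrtd.re_mul, Zsqrtd.im_mul, ← ha, ← hb]
    ring
  refine ⟨a, b, ?_, ?_, ?_⟩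
  · have hXuv : X = u - v := by omega
    rw [hXuv, hure, hvim]; ring
  · have hNuv : N = u + v := by omega
    rw [hNuv, hure, hvim]; ring
  · have hY3 : Y^3 = (a^2+b^2)^3 := by rw [← huv, hure, hvim]; ring
    exact Odd.strictMono_pow (R := ℤ) (by decide : Odd 3) |>.injective hY3

-- === main forward lemma over ℤ after Gaussian descent ===
lemma zmod3_no_sqrt_two (s : ℤ) (t : ℕ) (ht : 1 ≤ t) (h : s^2 = 3^t + 2) : False := by
  have hc := congrArg (fun z : ℤ => (z : ZMod 3)) h
  push_cast at hc
  rw [show ((3:ZMod 3)) = 0 by decide, zero_pow (by omega)] at hc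
  have : ∀ z : ZMod 3, z^2 ≠ 0 + 2 := by decide
  exact this _ hc

/-- The coprime positive solutions `(x, y, m)` with `m ≥ 1` of `x² + 3^(2m) = 2y³`
are exactly `(13, 5, 2)` and `(545, 53, 3)`. -/
theorem cube_case_solutions (x y m : ℕ) :
    (0 < x ∧ 0 < y ∧ 1 ≤ m ∧ Nat.gcd x y = 1 ∧
      x ^ 2 + 3 ^ (2 * m) = 2 * y ^ 3) ↔
    ((x, y, m) = (13, 5, 2) ∨ (x, y, m) = (545, 53, 3)) := by
  constructor
  · rintro ⟨hx, hy, hm, hgcd, heq⟩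
    have h3odd2 : (3:ℕ)^(2*m) % 2 = 1 := by rw [Nat.pow_mod]; norm_num
    have hx2odd : x^2 % 2 = 1 := by omega
    have hxodd : x % 2 = 1 := by
      have h2 := Nat.pow_mod x 2 2
      rcases Nat.mod_two_eq_zero_or_one x with h' | h'
      · rw [h'] at h2; norm_num at h2; omega
      · exact h'
    have h34 : (3:ℕ)^(2*m) % 4 = 1 := by rw [pow_mul, Nat.pow_mod]; norm_num
    have hx24 : x^2 % 4 = 1 := by
      have h2 := Nat.pow_mod x 2 4
      have : x % 4 = 1 ∨ x % 4 = 3 := by omega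
      rcases this with h'|h' <;> rw [h'] at h2 <;> norm_num at h2 <;> omega
    have hy3odd : y^3 % 2 = 1 := by omega
    have hyodd : y % 2 = 1 := by
      have h2 := Nat.pow_mod y 3 2
      rcases Nat.mod_two_eq_zero_or_one y with h' | h'
      · rw [h'] at h2; norm_num at h2; omega
      · exact h'
    have h3m : (3:ℕ) ∣ 3^(2*m) := dvd_pow_self 3 (by omega)
    have h3x : ¬ (3:ℕ) ∣ x := by
      intro h3x
      have h3x2 : (3:ℕ) ∣ x^2 := dvd_pow h3x (by norm_num)
      have h3y3 : (3:ℕ) ∣ y^3 := by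
        have h32 : (3:ℕ) ∣ 2*y^3 := by omega
        exact (Nat.Coprime.dvd_of_dvd_mul_left (by norm_num) h32)
      have h3y : 3 ∣ y := Nat.Prime.dvd_of_dvd_pow (by norm_num) h3y3
      have : (3:ℕ) ∣ Nat.gcd x y := Nat.dvd_gcd h3x h3y
      omega
    -- move to ℤ and apply the Gaussian descent
    have hpowZ : ((3:ℤ)^m)^2 = (3:ℤ)^(2*m) := by rw [← pow_mul]; congr 1; omega
    have heqZ : (x:ℤ)^2 + ((3:ℤ)^m)^2 = 2*(y:ℤ)^3 := by
      rw [hpowZ]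
      exact_mod_cast heq
    have hXodd : (x:ℤ) % 2 = 1 := by omega
    have hYodd : (y:ℤ) % 2 = 1 := by omega
    have hNodd : (3:ℤ)^m % 2 = 1 := by
      obtain ⟨t, ht⟩ : Odd ((3:ℤ)^m) := Odd.pow ⟨1, by norm_num⟩
      omega
    have hgcdZ : Int.gcd (x:ℤ) (y:ℤ) = 1 := by
      rw [Int.gcd_natCast_natCast]; exact hgcd
    obtain ⟨a, b, hX, hN, hY⟩ := gauss_cube (x:ℤ) ((3:ℤ)^m) (y:ℤ) hXodd hNodd hYodd hgcdZ heqZ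
    have h3xZ : ¬ (3:ℤ) ∣ (x:ℤ) := by
      intro hcon
      rw [show ((3:ℤ)) = ((3:ℕ):ℤ) by norm_num, Int.natCast_dvd_natCast] at hcon
      exact h3x hcon
    have hAB : (a-b)*(a^2+4*a*b+b^2) = 3^m := hN.symm
    have h3A : (3:ℤ) ∣ (a-b) := by
      by_contra h3A
      have h3prod : (3:ℤ) ∣ (a-b)*(a^2+4*a*b+b^2) := by
        rw [hAB]; exact dvd_pow_self 3 (by omega)
      have h3B : (3:ℤ) ∣ a^2+4*a*b+b^2 :=
        ((Int.prime_three).dvd_mul.mp h3prod).resolve_left h3A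
      have h6 : (3:ℤ) ∣ 6*(a*b) := ⟨2*(a*b), by ring⟩
      have h3sq : (3:ℤ) ∣ (a-b)^2 := by
        have hh := dvd_sub h3B h6
        rwa [show a^2+4*a*b+b^2 - 6*(a*b) = (a-b)^2 by ring] at hh
      exact h3A (Int.prime_three.dvd_of_dvd_pow h3sq)
    have h3a : ¬ (3:ℤ) ∣ a := by
      intro h3a
      have h3b : (3:ℤ) ∣ b := by
        have hh := dvd_sub h3a h3A
        rwa [show a-(a-b) = b by ring] at hh
      apply h3xZ
      rw [hX]
      exact Dvd.dvd.mul_right (dvd_add h3a h3b) _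
    have h3b : ¬ (3:ℤ) ∣ b := by
      intro h3b
      apply h3a
      have hh := dvd_add h3A h3b
      rwa [show (a-b)+b = a by ring] at hh
    have hBdvd : (a^2+4*a*b+b^2) ∣ (3:ℤ)^m := ⟨a-b, by rw [← hAB]; ring⟩
    have h3B : (3:ℤ) ∣ a^2+4*a*b+b^2 := by
      have h1 : (3:ℤ) ∣ (a-b)^2 := dvd_pow h3A (by norm_num)
      have h2 : (3:ℤ) ∣ 6*(a*b) := ⟨2*(a*b), by ring⟩
      have hh := dvd_add h1 h2
      rwa [show (a-b)^2 + 6*(a*b) = a^2+4*a*b+b^2 by ring] at hh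
    have h9B : ¬ (9:ℤ) ∣ a^2+4*a*b+b^2 := by
      intro h9
      have h9A : (9:ℤ) ∣ (a-b)^2 := by
        obtain ⟨t, ht⟩ := h3A
        exact ⟨t^2, by rw [ht]; ring⟩
      have h96 : (9:ℤ) ∣ 6*(a*b) := by
        have hh := dvd_sub h9 h9A
        rwa [show a^2+4*a*b+b^2 - (a-b)^2 = 6*(a*b) by ring] at hh
      have h3ab2 : (3:ℤ) ∣ 2*(a*b) := by
        obtain ⟨t, ht⟩ := h96
        exact ⟨t, by linarith⟩
      rcases (Int.prime_three.dvd_mul.mp h3ab2) with h|h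
      · norm_num at h
      · rcases Int.prime_three.dvd_mul.mp h with h|h
        exacts [h3a h, h3b h]
    have hBnat : (a^2+4*a*b+b^2).natAbs ∣ 3^m := by
      have h1 := Int.natAbs_dvd_natAbs.mpr hBdvd
      have h2 : ((3:ℤ)^m).natAbs = 3^m := by
        rw [Int.natAbs_pow]
        rfl
      rwa [h2] at h1
    obtain ⟨i, him, hieq⟩ := (Nat.dvd_prime_pow Nat.prime_three).mp hBnat
    have h3Bn : (3:ℕ) ∣ (a^2+4*a*b+b^2).natAbs := by
      have h1 := Int.natAbs_dvd_natAbs.mpr h3B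
      rwa [show ((3:ℤ)).natAbs = 3 from rfl] at h1
    have h9Bn : ¬ (9:ℕ) ∣ (a^2+4*a*b+b^2).natAbs := by
      intro hcon
      apply h9B
      exact Int.natAbs_dvd_natAbs.mp
        (by rw [show ((9:ℤ)).natAbs = 9 from rfl]; exact hcon)
    have hi1 : i = 1 := by
      rw [hieq] at h3Bn h9Bn
      match i, h3Bn, h9Bn with
      | 0, h, _ => simp at h
      | 1, _, _ => rfl
      | (i+2), _, h9 => exact absurd ⟨3^i, by ring⟩ h9
    have hBval : a^2+4*a*b+b^2 = 3 ∨ a^2+4*a*b+b^2 = -3 := by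
      have : (a^2+4*a*b+b^2).natAbs = 3 := by rw [hieq, hi1]; norm_num
      simpa using Int.natAbs_eq_iff.mp this
    have hA2 : ((3:ℤ)^(m-1))^2 = 3^(2*m-2) := by rw [← pow_mul]; congr 1; omega
    rcases hBval with hBv | hBv
    · -- B = 3 : impossible
      exfalso
      have hAval : a - b = 3^(m-1) := by
        have h1 : (a-b)*3 = 3^(m-1)*3 := by
          rw [hBv] at hAB
          rw [hAB, ← pow_succ]
          congr 1; omega
        exact mul_right_cancel₀ (by norm_num) h1
      have h6ab : 6*(a*b) = 3 - 3^(2*m-2) := by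
        linear_combination hBv - (a - b + 3^(m-1)) * hAval - hA2
      have hA2' : (a-b)^2 = 3^(2*m-2) := by rw [hAval]; exact hA2
      have hs3 : 3*(a+b)^2 = 3^(2*m-2) + 6 := by
        linear_combination 3*hA2' + 2*h6ab
      rcases Nat.lt_or_ge m 2 with hm2 | hm2
      · have hm1 : m = 1 := by omega
        subst hm1
        norm_num at hs3
        omega
      · have hpow : (3:ℤ)^(2*m-2) = 3*3^(2*m-3) := by
          rw [← pow_succ']
          congr 1; omega
        have hs2 : (a+b)^2 = 3^(2*m-3) + 2 := by
          rw [hpow] at hs3; linarith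
        exact zmod3_no_sqrt_two _ _ (by omega) hs2
    · -- B = -3
      have hAval : a - b = -3^(m-1) := by
        have h1 : (a-b)*(-3) = 3^(m-1)*3 := by
          rw [hBv] at hAB
          rw [hAB, ← pow_succ]
          congr 1; omega
        have h2 : (-(a-b))*3 = 3^(m-1)*3 := by linarith
        have h3 := mul_right_cancel₀ (show (3:ℤ) ≠ 0 by norm_num) h2
        linarith
      have h6ab : 6*(a*b) = -3 - 3^(2*m-2) := by
        linear_combination hBv - (a - b - 3^(m-1)) * hAval - hA2
      have hA2' : (a-b)^2 = 3^(2*m-2) := by rw [hAval, neg_sq]; exact hA2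
      rcases Nat.lt_or_ge m 2 with hm2 | hm2
      · exfalso
        have hm1 : m = 1 := by omega
        subst hm1
        norm_num at h6ab
        omega
      · have hpow : (3:ℤ)^(2*m-2) = 3*3^(2*m-3) := by
          rw [← pow_succ']
          congr 1; omega
        have hs3 : 3*(a+b)^2 = 3^(2*m-2) - 6 := by
          linear_combination 3*hA2' + 2*h6ab
        have hs2 : (a+b)^2 + 2 = 3^(2*m-3) := by
          rw [hpow] at hs3; linarith
        have hsplit : (3:ℤ)^(2*m-3) = 3*((3:ℤ)^(m-2))^2 := by
          rw [← pow_mul, ← pow_succ']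
          congr 1; omega
        have hnat : ((a+b).natAbs)^2 + 2 = 3*((3:ℕ)^(m-2))^2 := by
          have hcast : (((a+b).natAbs:ℤ))^2 + 2 = 3*(((3:ℕ)^(m-2):ℕ):ℤ)^2 := by
            rw [Int.natAbs_sq]
            push_cast
            rw [hs2, hsplit]
          exact_mod_cast hcast
        obtain ⟨k, hk1, hk2⟩ := pell_classify ((3:ℕ)^(m-2)) ((a+b).natAbs) hnat
        rcases w_pow3 k (m-2) hk2.symm with rfl | rfl
        · -- k = 0 : m = 2, solution (13,5,2)
          have h31 : (3:ℕ)^(m-2) = 1 := by simpa [pp] using hk2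
          have hm2' : m = 2 := by
            by_contra hne
            have h1 : 1 ≤ m - 2 := by omega
            have h2 : (3:ℕ)^1 ≤ 3^(m-2) := Nat.pow_le_pow_right (by norm_num) h1
            rw [pow_one] at h2
            omega
          subst hm2'
          norm_num at hAval h6ab
          have hab : a*b = -2 := by omega
          have habs : (a+b).natAbs = 1 := by simpa [pp] using hk1
          have hs : a+b = 1 ∨ a+b = -1 := by simpa using Int.natAbs_eq_iff.mp habs
          have hy5 : (y:ℤ) = 5 := by
            linear_combination hY + (a - b - 3)*hAval + 2*hab
          have hx13 : (x:ℤ) = 13*(a+b) := by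
            linear_combination hX + (a+b)*((a-b-3)*hAval - 2*hab)
          rcases hs with hs | hs
          · rw [hs] at hx13
            have hxv : x = 13 := by omega
            have hyv : y = 5 := by omega
            subst hxv; subst hyv
            exact Or.inl rfl
          · rw [hs] at hx13
            omega
        · -- k = 1 : m = 3, solution (545,53,3)
          have h31 : (3:ℕ)^(m-2) = 3 := by simpa [pp] using hk2
          have hm3 : m = 3 := by
            have h1 : m - 2 = 1 := by
              by_contra hne
              rcases Nat.lt_or_ge (m-2) 1 with hlt | hge
              · have h0 : m - 2 = 0 := by omega
                rw [h0] at h31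
                norm_num at h31
              · have h2 : 2 ≤ m - 2 := by omega
                have h3 : (3:ℕ)^2 ≤ 3^(m-2) := Nat.pow_le_pow_right (by norm_num) h2
                norm_num at h3
                omega
            omega
          subst hm3
          norm_num at hAval h6ab
          have hab : a*b = -14 := by omega
          have habs : (a+b).natAbs = 5 := by simpa [pp] using hk1
          have hs : a+b = 5 ∨ a+b = -5 := by simpa using Int.natAbs_eq_iff.mp habs
          have hy53 : (y:ℤ) = 53 := by
            linear_combination hY + (a - b - 9)*hAval + 2*hab
          have hx545 : (x:ℤ) = 109*(a+b) := by
            linear_combination hX + (a+b)*((a-b-9)*hAval - 2*hab)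
          rcases hs with hs | hs
          · rw [hs] at hx545
            have hxv : x = 545 := by omega
            have hyv : y = 53 := by omega
            subst hxv; subst hyv
            exact Or.inr rfl
          · rw [hs] at hx545
            omega
  · rintro (h|h) <;>
    · simp only [Prod.mk.injEq] at h
      obtain ⟨rfl, rfl, rfl⟩ := h
      refine ⟨by norm_num, by norm_num, by norm_num, by norm_num, by norm_num⟩
end

section
/- Let p be an odd prime. There exist no coprime positive integers x, y and integer m ≥ 0 such that x² + 3^(2m+1) = 2·y^p. -/
theorem no_solution_odd_power_of_three (p : ℕ) (hp : Nat.Prime p) (hop : Odd p) :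
    ¬ ∃ x y m : ℕ, 0 < x ∧ 0 < y ∧ Nat.gcd x y = 1 ∧
      x ^ 2 + 3 ^ (2 * m + 1) = 2 * y ^ p := by
  rintro ⟨x, y, m, hx, hy, -, heq⟩
  have hp3 : 3 ≤ p := by
    have h2 := hp.two_le
    have hne : p ≠ 2 := by rintro rfl; exact (by decide : ¬ Odd 2) hop
    omega
  have hb : 3 ^ (2 * m + 1) % 8 = 3 := by
    have h9 : 3 ^ (2 * m + 1) = 9 ^ m * 3 := by
      rw [pow_succ, pow_mul]; norm_num
    rw [h9, Nat.mul_mod, Nat.pow_mod]; norm_num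
  have hxodd : x % 2 = 1 := by
    by_contra h
    have hx2 : x % 2 = 0 := by omega
    have ha2 : x ^ 2 % 2 = 0 := by simp [Nat.pow_mod, hx2]
    omega
  have ha : x ^ 2 % 8 = 1 := by
    have h8 : x ^ 2 % 8 = (x % 8) ^ 2 % 8 := Nat.pow_mod x 2 8
    have h1 : x % 8 % 2 = x % 2 := Nat.mod_mod_of_dvd x (by norm_num)
    have h2 : x % 8 < 8 := Nat.mod_lt _ (by norm_num)
    set r := x % 8 with hr
    interval_cases r <;> omega
  have hy2 : y % 2 = 0 := by
    by_contra h
    have h1 : y % 2 = 1 := by omega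
    have hc : y ^ p % 2 = 1 := by simp [Nat.pow_mod, h1]
    omega
  obtain ⟨t, rfl⟩ : 2 ∣ y := Nat.dvd_of_mod_eq_zero hy2
  have hmp : (2 * t) ^ p = 2 ^ p * t ^ p := mul_pow 2 t p
  have h8 : (8 : ℕ) ∣ 2 ^ p := by
    calc (8 : ℕ) = 2 ^ 3 := by norm_num
    _ ∣ 2 ^ p := pow_dvd_pow 2 hp3
  have hd : 8 ∣ (2 * t) ^ p := hmp ▸ Dvd.dvd.mul_right h8 _
  omega
end
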